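/- arXiv:1605.05615 — 6 statements merged into one kernel-verified Lean document; each statement's English description precedes it below -/
import Mathlib

section
/- Let τ < ∞ and [t₁,t₂] ⊂ [0,τ). The map ψ : D̃[t₁,t₂] → D[t₁,t₂], ψ(θ)(s) = (1/θ(s))∫_s^τ θ(u) du, is Hadamard-differentiable at every θ ∈ C̃[t₁,t₂] tangentially to C²[t₁,τ] with derivative (dψ(θ)·h)(s) = (1/θ(s))∫_s^τ h(u) du − h(s)∫_s^τ θ(u) du / θ(s)². Explicitly: for every sequence tₙ ↓ 0, every h ∈ C²[t₁,τ], and every sequence (hₙ) of bounded functions in D[t₁,τ] with sup_{u∈[t₁,τ]}|hₙ(u) − h(u)| → 0 and θ + tₙhₙ ∈ D̃[t₁,t₂] for all n, one has sup_{s∈[t₁,t₂]} | (ψ(θ + tₙhₙ)(s) − ψ(θ)(s))/tₙ − (dψ(θ)·h)(s) | → 0 as n → ∞. -/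
/-! Algebraically, the difference quotient at `s` is exactly
`(∫_s^τ hₙ) / (θ s + tₙ hₙ s) - hₙ s (∫_s^τ θ) / ((θ s + tₙ hₙ s) θ s)`.
Uniform convergence `hₙ → h` on `[t₁, τ]` gives uniform convergence of `s ↦ ∫_s^τ hₙ`, and
`θ + tₙ hₙ → θ` uniformly. All limits are continuous on the compact interval `[t₁, t₂]`, where
`θ` does not vanish, so the locally uniform limit rules for products and quotients give uniform
convergence to `dψ(θ)·h`. -/

open MeasureTheory Filter Set intervalIntegral

noncomputable section

/-- The mean-residual-lifetime functional `ψ(θ)(s) = (1/θ(s)) ∫_s^τ θ(u) du`. -/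
def mrlFunctional (τ : ℝ) (θ : ℝ → ℝ) (s : ℝ) : ℝ :=
  (1 / θ s) * ∫ u in s..τ, θ u

/-- The candidate Hadamard derivative
`(dψ(θ)·h)(s) = (1/θ(s)) ∫_s^τ h(u) du − h(s) ∫_s^τ θ(u) du / θ(s)²`. -/
def mrlDerivative (τ : ℝ) (θ h : ℝ → ℝ) (s : ℝ) : ℝ :=
  (1 / θ s) * (∫ u in s..τ, h u) - h s * (∫ u in s..τ, θ u) / (θ s) ^ 2

open Topology

lemma tendsto_ceil_mul_div_nhdsGE (u : ℝ) :
    Tendsto (fun n : ℕ => (⌈((n : ℝ) + 1) * u⌉ : ℝ) / ((n : ℝ) + 1)) atTop (𝓝[≥] u) := by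
  have hpos : ∀ n : ℕ, (0 : ℝ) < (n : ℝ) + 1 := fun n => n.cast_add_one_pos
  have hlower : ∀ n : ℕ, u ≤ (⌈((n : ℝ) + 1) * u⌉ : ℝ) / ((n : ℝ) + 1) := fun n => by
    rw [le_div_iff₀ (hpos n), mul_comm]
    exact Int.le_ceil _
  have hupper : ∀ n : ℕ, (⌈((n : ℝ) + 1) * u⌉ : ℝ) / ((n : ℝ) + 1) ≤ u + 1 / ((n : ℝ) + 1) :=
    fun n => calc
      _ ≤ (((n : ℝ) + 1) * u + 1) / ((n : ℝ) + 1) :=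
        div_le_div_of_nonneg_right (Int.ceil_lt_add_one _).le (hpos n).le
      _ = u + 1 / ((n : ℝ) + 1) := by field_simp
  refine tendsto_nhdsWithin_iff.2 ⟨?_, .of_forall hlower⟩
  refine tendsto_of_tendsto_of_tendsto_of_le_of_le tendsto_const_nhds ?_ hlower hupper
  simpa using tendsto_const_nhds.add (tendsto_one_div_add_atTop_nhds_zero_nat (𝕜 := ℝ))

/-- A right-continuous function is a pointwise limit of the countably-valued functions
`u ↦ g (⌈(n+1) u⌉ / (n+1))`. -/
lemma aestronglyMeasurable_of_continuousWithinAt_Ici {β : Type*} [TopologicalSpace β]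
    [TopologicalSpace.PseudoMetrizableSpace β] {g : ℝ → β} {S : Set ℝ} (hS : MeasurableSet S)
    (μ : Measure ℝ) (hg : ∀ u ∈ S, ContinuousWithinAt g (Ici u) u) :
    AEStronglyMeasurable g (μ.restrict S) := by
  refine aestronglyMeasurable_of_tendsto_ae atTop
    (f := fun (n : ℕ) u => g ((⌈((n : ℝ) + 1) * u⌉ : ℝ) / ((n : ℝ) + 1))) (fun n => ?_) ?_
  · exact (StronglyMeasurable.of_discrete (f := fun j : ℤ => g (j / ((n : ℝ) + 1))))
      |>.comp_measurable (Int.measurable_ceil.comp (measurable_const_mul _))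
      |>.aestronglyMeasurable
  · exact (ae_restrict_iff' hS).2 <| .of_forall fun u hu =>
      (hg u hu).tendsto.comp (tendsto_ceil_mul_div_nhdsGE u)

lemma intervalIntegrable_of_norm_le_of_continuousWithinAt_Ici {E : Type*}
    [NormedAddCommGroup E] {g : ℝ → E} {a b M : ℝ} (hab : a ≤ b)
    (hM : ∀ u ∈ Ico a b, ‖g u‖ ≤ M) (hg : ∀ u ∈ Ico a b, ContinuousWithinAt g (Ici u) u) :
    IntervalIntegrable g volume a b := by
  rw [intervalIntegrable_iff_integrableOn_Ico_of_le hab]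
  exact (integrable_const M).mono' (aestronglyMeasurable_of_continuousWithinAt_Ici
    measurableSet_Ico volume hg) ((ae_restrict_iff' measurableSet_Ico).2 (.of_forall hM))

lemma tendstoUniformlyOn_of_tendsto_sSup_dist {α β ι : Type*} [PseudoMetricSpace β]
    {F : ι → α → β} {f : α → β} {l : Filter ι} {s : Set α}
    (hbdd : ∀ n, BddAbove ((fun x => dist (F n x) (f x)) '' s))
    (hsup : Tendsto (fun n => sSup ((fun x => dist (F n x) (f x)) '' s)) l (𝓝 0)) :
    TendstoUniformlyOn F f l s := by
  refine Metric.tendstoUniformlyOn_iff.2 fun ε hε => ?_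
  filter_upwards [hsup.eventually_lt_const hε] with n hn x hx
  rw [dist_comm]
  exact (le_csSup (hbdd n) (mem_image_of_mem _ hx)).trans_lt hn

lemma tendstoLocallyUniformlyOn_const {α β ι : Type*} [TopologicalSpace α] [UniformSpace β]
    (f : α → β) (l : Filter ι) (s : Set α) :
    TendstoLocallyUniformlyOn (fun _ => f) f l s :=
  fun _ hu _ _ => ⟨univ, univ_mem, .of_forall fun _ _ _ => refl_mem_uniformity hu⟩

lemma tendstoLocallyUniformlyOn_add_mul_of_tendsto_zero {X ι 𝕜 : Type*} [TopologicalSpace X]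
    [NormedField 𝕜] {s : Set X} {l : Filter ι} {f g₀ : X → 𝕜} {g : ι → X → 𝕜} {t : ι → 𝕜}
    (hg : TendstoLocallyUniformlyOn g g₀ l s) (hg₀ : ContinuousOn g₀ s) (ht : Tendsto t l (𝓝 0)) :
    TendstoLocallyUniformlyOn (fun n x => f x + t n * g n x) f l s := by
  simpa using (tendstoLocallyUniformlyOn_const f l s).fun_add
    ((ht.tendstoUniformlyOn_const s).tendstoLocallyUniformlyOn.fun_mul₀ hg continuousOn_const hg₀)

lemma TendstoLocallyUniformlyOn.div_sub_mul_div {X ι 𝕜 : Type*} [TopologicalSpace X]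
    [NormedField 𝕜] {s : Set X} {l : Filter ι} {a b B : ι → X → 𝕜} {a₀ b₀ B₀ A : X → 𝕜}
    (hB : TendstoLocallyUniformlyOn B B₀ l s) (ha : TendstoLocallyUniformlyOn a a₀ l s)
    (hb : TendstoLocallyUniformlyOn b b₀ l s) (hB₀ : ContinuousOn B₀ s)
    (ha₀ : ContinuousOn a₀ s) (hb₀ : ContinuousOn b₀ s) (hA : ContinuousOn A s)
    (ha₀_ne : ∀ x ∈ s, a₀ x ≠ 0) :
    TendstoLocallyUniformlyOn (fun n x => B n x / a n x - b n x * A x / (a n x * a₀ x))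
      (fun x => B₀ x / a₀ x - b₀ x * A x / (a₀ x * a₀ x)) l s :=
  (hB.fun_div₀ ha hB₀ ha₀ ha₀_ne).fun_sub
    ((hb.fun_mul₀ (tendstoLocallyUniformlyOn_const A l s) hb₀ hA).fun_div₀
      (ha.fun_mul₀ (tendstoLocallyUniformlyOn_const a₀ l s) ha₀ ha₀) (hb₀.mul hA) (ha₀.mul ha₀)
      fun x hx => mul_ne_zero (ha₀_ne x hx) (ha₀_ne x hx))

lemma TendstoUniformlyOn.intervalIntegral_left {ι E : Type*} [NormedAddCommGroup E]
    [NormedSpace ℝ E] {F : ι → ℝ → E} {f : ℝ → E} {l : Filter ι} {a b : ℝ}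
    (hF : ∀ᶠ n in l, IntervalIntegrable (F n) volume a b) (hf : IntervalIntegrable f volume a b)
    (hunif : TendstoUniformlyOn F f l (Icc a b)) :
    TendstoUniformlyOn (fun n s => ∫ u in s..b, F n u) (fun s => ∫ u in s..b, f u) l
      (Icc a b) := by
  refine Metric.tendstoUniformlyOn_iff.2 fun ε hε => ?_
  have hδ : 0 < ε / (|b - a| + 1) := by positivity
  filter_upwards [hF, Metric.tendstoUniformlyOn_iff.1 hunif _ hδ] with n hFn hn s hs
  have hsub : uIcc s b ⊆ uIcc a b := uIcc_subset_uIcc (mem_uIcc_of_le hs.1 hs.2) right_mem_uIcc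
  have hbound : ∀ u ∈ uIoc s b, ‖f u - F n u‖ ≤ ε / (|b - a| + 1) := fun u hu => by
    rw [uIoc_of_le hs.2] at hu
    exact (dist_eq_norm (f u) (F n u) ▸ hn u ⟨hs.1.trans hu.1.le, hu.2⟩).le
  have hlen : |b - s| ≤ |b - a| := by
    rw [abs_of_nonneg (sub_nonneg.2 hs.2), abs_of_nonneg (sub_nonneg.2 (hs.1.trans hs.2))]
    linarith [hs.1]
  rw [dist_eq_norm, ← integral_sub (hf.mono_set hsub) (hFn.mono_set hsub)]
  calc ‖∫ u in s..b, f u - F n u‖ ≤ ε / (|b - a| + 1) * |b - s| :=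
        norm_integral_le_of_norm_le_const hbound
    _ ≤ ε / (|b - a| + 1) * |b - a| := by gcongr
    _ < ε / (|b - a| + 1) * (|b - a| + 1) := by gcongr; linarith
    _ = ε := div_mul_cancel₀ _ (by positivity)

lemma ContinuousOn.continuousOn_integral_left {E : Type*} [NormedAddCommGroup E]
    [NormedSpace ℝ E] {f : ℝ → E} {a b : ℝ} (hab : a ≤ b) (hf : ContinuousOn f (Icc a b)) :
    ContinuousOn (fun s => ∫ u in s..b, f u) (Icc a b) :=
  uIcc_of_le hab ▸ continuousOn_primitive_interval_left (uIcc_of_le hab ▸ hf.integrableOn_Icc)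

lemma mrlFunctional_difference_quotient {τ s t : ℝ} {θ g : ℝ → ℝ}
    (hθ : IntervalIntegrable θ volume s τ) (hg : IntervalIntegrable g volume s τ) (ht : t ≠ 0)
    (hθs : θ s ≠ 0) (hθgs : θ s + t * g s ≠ 0) :
    (mrlFunctional τ (fun u => θ u + t * g u) s - mrlFunctional τ θ s) / t =
      (∫ u in s..τ, g u) / (θ s + t * g s) -
        g s * (∫ u in s..τ, θ u) / ((θ s + t * g s) * θ s) := by
  rw [mrlFunctional, mrlFunctional, integral_add hθ (hg.const_mul t),
    intervalIntegral.integral_const_mul]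
  field_simp
  ring

theorem mrl_functional_hadamard_differentiable_general
    (t₁ t₂ τ : ℝ) (ht₁₂ : t₁ ≤ t₂) (ht₂τ : t₂ < τ)
    -- θ ∈ C̃[t₁,t₂] : continuous on [t₁,τ] and bounded away from 0 on [t₁,t₂]
    (θ : ℝ → ℝ) (hθcont : ContinuousOn θ (Icc t₁ τ))
    (hθpos : ∃ c > (0 : ℝ), ∀ s ∈ Icc t₁ t₂, c ≤ |θ s|)
    -- the sequence tₙ ↓ 0
    (tseq : ℕ → ℝ) (htpos : ∀ n, 0 < tseq n)
    (htlim : Tendsto tseq atTop (nhds 0))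
    -- h ∈ C²[t₁,τ]
    (h : ℝ → ℝ) (hh : ContDiffOn ℝ 2 h (Icc t₁ τ))
    -- hₙ : a sequence of bounded càdlàg functions on [t₁,τ]
    (hn : ℕ → ℝ → ℝ)
    (hbdd : ∀ n, ∃ M : ℝ, ∀ u ∈ Icc t₁ τ, |hn n u| ≤ M)
    (hrc : ∀ n, ∀ u ∈ Ico t₁ τ, ContinuousWithinAt (hn n) (Ici u) u)
    -- sup_{[t₁,τ]} |hₙ − h| → 0
    (hconv : Tendsto (fun n => sSup ((fun u => |hn n u - h u|) '' Icc t₁ τ)) atTop (nhds 0))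
    -- θ + tₙ hₙ ∈ D̃[t₁,t₂] : bounded away from 0 on [t₁,t₂]
    (hmem : ∀ n, ∃ c > (0 : ℝ), ∀ s ∈ Icc t₁ t₂, c ≤ |θ s + tseq n * hn n s|) :
    TendstoUniformlyOn
      (fun n s => (mrlFunctional τ (fun u => θ u + tseq n * hn n u) s
          - mrlFunctional τ θ s) / tseq n)
      (mrlDerivative τ θ h) atTop (Icc t₁ t₂) := by
  have ht₁τ : t₁ ≤ τ := ht₁₂.trans ht₂τ.le
  have hsub : Icc t₁ t₂ ⊆ Icc t₁ τ := Icc_subset_Icc_right ht₂τ.le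
  have hne_zero : ∀ {f : ℝ → ℝ}, (∃ c > (0 : ℝ), ∀ s ∈ Icc t₁ t₂, c ≤ |f s|) →
      ∀ s ∈ Icc t₁ t₂, f s ≠ 0 := fun ⟨c, hc, hcf⟩ s hs => abs_pos.1 (hc.trans_le (hcf s hs))
  have hhcont : ContinuousOn h (Icc t₁ τ) := hh.continuousOn
  have hnint : ∀ n, IntervalIntegrable (hn n) volume t₁ τ := fun n =>
    let ⟨_, hM⟩ := hbdd n
    intervalIntegrable_of_norm_le_of_continuousWithinAt_Ici ht₁τ
      (fun u hu => hM u (Ico_subset_Icc_self hu)) (hrc n)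
  have hunif : TendstoUniformlyOn hn h atTop (Icc t₁ τ) := by
    refine tendstoUniformlyOn_of_tendsto_sSup_dist (fun n => ?_) hconv
    obtain ⟨M, hM⟩ := hbdd n
    obtain ⟨H, hH⟩ := isCompact_Icc.exists_bound_of_continuousOn hhcont
    exact ⟨M + H, forall_mem_image.2 fun u hu =>
      (abs_sub _ _).trans (add_le_add (hM u hu) (hH u hu))⟩
  have hb := (hunif.mono hsub).tendstoLocallyUniformlyOn
  have hB := ((hunif.intervalIntegral_left (.of_forall hnint)
    (hhcont.intervalIntegrable_of_Icc ht₁τ)).mono hsub).tendstoLocallyUniformlyOn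
  have hQ := hB.div_sub_mul_div (tendstoLocallyUniformlyOn_add_mul_of_tendsto_zero hb
      (hhcont.mono hsub) htlim) hb ((hhcont.continuousOn_integral_left ht₁τ).mono hsub)
    (hθcont.mono hsub) (hhcont.mono hsub) ((hθcont.continuousOn_integral_left ht₁τ).mono hsub)
    (hne_zero hθpos)
  rw [← tendstoLocallyUniformlyOn_iff_tendstoUniformlyOn_of_compact isCompact_Icc]
  refine (hQ.congr fun n s hs => ?_).congr_right fun s _ => ?_
  · have hsτ : uIcc s τ ⊆ uIcc t₁ τ :=
      uIcc_subset_uIcc (mem_uIcc_of_le hs.1 (hs.2.trans ht₂τ.le)) right_mem_uIcc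
    exact (mrlFunctional_difference_quotient
      ((hθcont.intervalIntegrable_of_Icc ht₁τ).mono_set hsτ) ((hnint n).mono_set hsτ)
      (htpos n).ne' (hne_zero hθpos s hs) (hne_zero (hmem n) s hs)).symm
  · simp only [mrlDerivative]
    ring

/-- Hadamard differentiability of the mean-residual-lifetime functional `ψ` at
`θ ∈ C̃[t₁,t₂]` tangentially to `C²[t₁,τ]`: for every sequence `tₙ ↓ 0`, every
`h ∈ C²[t₁,τ]` and every sequence `hₙ` of bounded càdlàg functions on `[t₁,τ]` with
`sup_{[t₁,τ]} |hₙ − h| → 0` and `θ + tₙ hₙ ∈ D̃[t₁,t₂]` for all `n`, the difference quotients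
`(ψ(θ + tₙhₙ) − ψ(θ))/tₙ` converge uniformly on `[t₁,t₂]` to `dψ(θ)·h`. -/
theorem mrl_functional_hadamard_differentiable
    (t₁ t₂ τ : ℝ) (ht₁ : 0 ≤ t₁) (ht₁₂ : t₁ ≤ t₂) (ht₂τ : t₂ < τ)
    -- θ ∈ C̃[t₁,t₂] : continuous on [t₁,τ] and bounded away from 0 on [t₁,t₂]
    (θ : ℝ → ℝ) (hθcont : ContinuousOn θ (Icc t₁ τ))
    (hθpos : ∃ c > (0 : ℝ), ∀ s ∈ Icc t₁ t₂, c ≤ |θ s|)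
    -- the sequence tₙ ↓ 0
    (tseq : ℕ → ℝ) (htpos : ∀ n, 0 < tseq n) (htanti : Antitone tseq)
    (htlim : Tendsto tseq atTop (nhds 0))
    -- h ∈ C²[t₁,τ]
    (h : ℝ → ℝ) (hh : ContDiffOn ℝ 2 h (Icc t₁ τ))
    -- hₙ : a sequence of bounded càdlàg functions on [t₁,τ]
    (hn : ℕ → ℝ → ℝ)
    (hbdd : ∀ n, ∃ M : ℝ, ∀ u ∈ Icc t₁ τ, |hn n u| ≤ M)
    (hrc : ∀ n, ∀ u ∈ Ico t₁ τ, ContinuousWithinAt (hn n) (Ici u) u)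
    (hll : ∀ n, ∀ u ∈ Ioc t₁ τ, ∃ l : ℝ, Tendsto (hn n) (nhdsWithin u (Iio u)) (nhds l))
    -- sup_{[t₁,τ]} |hₙ − h| → 0
    (hconv : Tendsto (fun n => sSup ((fun u => |hn n u - h u|) '' Icc t₁ τ)) atTop (nhds 0))
    -- θ + tₙ hₙ ∈ D̃[t₁,t₂] : bounded away from 0 on [t₁,t₂]
    (hmem : ∀ n, ∃ c > (0 : ℝ), ∀ s ∈ Icc t₁ t₂, c ≤ |θ s + tseq n * hn n s|) :
    TendstoUniformlyOn
      (fun n s => (mrlFunctional τ (fun u => θ u + tseq n * hn n u) s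
          - mrlFunctional τ θ s) / tseq n)
      (mrlDerivative τ θ h) atTop (Icc t₁ t₂) :=
  mrl_functional_hadamard_differentiable_general t₁ t₂ τ ht₁₂ ht₂τ θ hθcont hθpos tseq htpos htlim h
    hh hn hbdd hrc hconv hmem

end
end

section
/- Let S : [0,τ] → [0,1] be continuous and nonincreasing with S(0)=1 and τ = inf{t ≥ 0 : S(t) = 0} ∈ (0,∞], and let G : [0,∞) → [0,1] be nonincreasing and right-continuous with −∫₀^τ dS(w)/G(w−) < ∞. Define Γ(u,v) = −S(u)S(v) ∫_{(0,u∧v]} dS(w) / (S(w)² G(w−)). Then Γ(u,v) → 0 as u,v → τ (i.e., as u ∧ v ↑ τ). -/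
/-!
Let `ν = dF / G(w−)` on `(0, τ]`, a finite measure by (C1). For `0 ≤ a ≤ m = u ∧ v`, split
`(0, m]` at `a`. On `(a, m]` the factor `S(u)S(v)/S(w)²` is at most `1`, so this part is bounded by
`ν(a, τ]`, which tends to `0` as `a ↑ τ` because `F` is continuous and `ν` has no atom at `τ`.
On `(0, a]` the integrand is at most `1/S(a)²` against `ν`, and the prefactor `S(u)S(v)` is at most
`S(t₀)²`, which tends to `0` as `t₀ ↑ τ`.
-/

open MeasureTheory Filter Set
open scoped ENNReal Topology

noncomputable section

-- No sign condition on `y` is needed: `ofReal` sends nonpositive reals to `0`, and `0⁻¹ = ∞`.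
lemma ENNReal.inv_ofReal_mul {x : ℝ} (hx : 0 ≤ x) (y : ℝ) :
    (ENNReal.ofReal (x * y))⁻¹ = (ENNReal.ofReal x)⁻¹ * (ENNReal.ofReal y)⁻¹ := by
  rw [ENNReal.ofReal_mul hx, ENNReal.mul_inv (Or.inr ENNReal.ofReal_ne_top)
    (Or.inl ENNReal.ofReal_ne_top)]

lemma mul_setLIntegral_Ioc_inv_mul_le {μ : Measure ℝ} {φ g : ℝ → ℝ≥0∞} (hφ : Antitone φ)
    {b a m : ℝ} (hba : b ≤ a) (ham : a ≤ m) (hm : φ m ≠ ∞) :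
    φ m * ∫⁻ w in Ioc b m, (φ w)⁻¹ * g w ∂μ ≤
      φ m * (φ a)⁻¹ * ∫⁻ w in Ioc b a, g w ∂μ + ∫⁻ w in Ioc a m, g w ∂μ := by
  have hc : φ m * (φ a)⁻¹ ≠ ∞ := by
    rcases eq_or_ne (φ a) 0 with ha | ha
    · simp [le_antisymm (ha ▸ hφ ham) bot_le]
    · exact ENNReal.mul_ne_top hm (ENNReal.inv_ne_top.2 ha)
  calc φ m * ∫⁻ w in Ioc b m, (φ w)⁻¹ * g w ∂μ
      ≤ ∫⁻ w in Ioc b m, φ m * ((φ w)⁻¹ * g w) ∂μ := lintegral_const_mul_le _ _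
    _ = ∫⁻ w in Ioc b a, φ m * ((φ w)⁻¹ * g w) ∂μ + ∫⁻ w in Ioc a m, φ m * ((φ w)⁻¹ * g w) ∂μ := by
      rw [← Ioc_union_Ioc_eq_Ioc hba ham, lintegral_union measurableSet_Ioc
        (Ioc_disjoint_Ioc_of_le le_rfl)]
    _ ≤ ∫⁻ w in Ioc b a, φ m * (φ a)⁻¹ * g w ∂μ + ∫⁻ w in Ioc a m, g w ∂μ := by
      refine add_le_add (setLIntegral_mono' measurableSet_Ioc fun w hw => ?_)
        (setLIntegral_mono' measurableSet_Ioc fun w hw => ?_)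
      · rw [← mul_assoc]
        gcongr
        exact hφ hw.2
      · rw [← mul_assoc, ← div_eq_mul_inv]
        exact mul_le_of_le_one_left' (ENNReal.div_le_of_le_mul (by rw [one_mul]; exact hφ hw.2))
    _ = φ m * (φ a)⁻¹ * ∫⁻ w in Ioc b a, g w ∂μ + ∫⁻ w in Ioc a m, g w ∂μ := by
      rw [lintegral_const_mul' _ _ hc]

lemma ENNReal.exists_seq_ofReal_tendsto {τ : ℝ≥0∞} (hτ : 0 < τ) :
    ∃ a : ℕ → ℝ, Monotone a ∧ (∀ n, 0 < a n ∧ ENNReal.ofReal (a n) < τ) ∧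
      Tendsto (fun n => ENNReal.ofReal (a n)) atTop (𝓝 τ) := by
  obtain ⟨u, hu_mono, hu_mem, hu_lim⟩ := exists_seq_strictMono_tendsto' hτ
  have hu_top n : u n ≠ ∞ := (hu_mem n).2.ne_top
  refine ⟨fun n => (u n).toReal, fun m n h => ENNReal.toReal_mono (hu_top n) (hu_mono.monotone h),
    fun n => ⟨ENNReal.toReal_pos (hu_mem n).1.ne' (hu_top n), ?_⟩, ?_⟩
  · simpa [ENNReal.ofReal_toReal (hu_top n)] using (hu_mem n).2
  · simpa [ENNReal.ofReal_toReal (hu_top _)] using hu_lim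

lemma tendsto_measure_Ioi_of_tendsto_ofReal {ν : Measure ℝ} [IsFiniteMeasure ν] {τ : ℝ≥0∞}
    {a : ℕ → ℝ} (ha : Monotone a) (hlim : Tendsto (fun n => ENNReal.ofReal (a n)) atTop (𝓝 τ))
    (hν : ν {w | τ ≤ ENNReal.ofReal w} = 0) :
    Tendsto (fun n => ν (Ioi (a n))) atTop (𝓝 0) := by
  have hsub : ⋂ n, Ioi (a n) ⊆ {w | τ ≤ ENNReal.ofReal w} := fun w hw =>
    le_of_tendsto' hlim fun n => ENNReal.ofReal_le_ofReal (mem_iInter.1 hw n).le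
  simpa [Function.comp_def, measure_mono_null hsub hν] using tendsto_measure_iInter_atTop
    (fun n => measurableSet_Ioi.nullMeasurableSet) (fun m n h => Ioi_subset_Ioi (ha h))
    ⟨0, measure_ne_top ν _⟩

def firstZero (S : ℝ → ℝ) : ℝ≥0∞ :=
  sInf {u : ℝ≥0∞ | ∃ r : ℝ, 0 ≤ r ∧ S r = 0 ∧ u = ENNReal.ofReal r}

section FirstZero

variable {S : ℝ → ℝ}

lemma pos_of_ofReal_lt_firstZero (hS : ∀ t, 0 ≤ S t) {a : ℝ} (ha : 0 ≤ a)
    (h : ENNReal.ofReal a < firstZero S) : 0 < S a :=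
  (hS a).lt_of_ne fun h0 => h.not_ge (sInf_le ⟨a, ha, h0.symm, rfl⟩)

lemma eq_zero_of_firstZero_lt (hSanti : Antitone S) (hS : ∀ t, 0 ≤ S t) {x : ℝ}
    (h : firstZero S < ENNReal.ofReal x) : S x = 0 := by
  obtain ⟨_, ⟨r, -, hr, rfl⟩, hrx⟩ := sInf_lt_iff.1 h
  exact le_antisymm (hr ▸ hSanti (ENNReal.ofReal_lt_ofReal_iff'.1 hrx).1.le) (hS x)

lemma apply_toReal_firstZero (hScont : Continuous S) (hSanti : Antitone S) (hS : ∀ t, 0 ≤ S t)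
    (h : firstZero S ≠ ∞) : S (firstZero S).toReal = 0 := by
  have hzero : ∀ x ∈ Ioi (firstZero S).toReal, S x = 0 := fun x hx =>
    eq_zero_of_firstZero_lt hSanti hS ((ENNReal.lt_ofReal_iff_toReal_lt h).2 hx)
  exact tendsto_nhds_unique hScont.continuousWithinAt.tendsto
    (tendsto_const_nhds.congr' (eventually_nhdsWithin_of_forall fun x hx => (hzero x hx).symm))

lemma tendsto_zero_of_tendsto_firstZero (hScont : Continuous S) (hSanti : Antitone S)
    (hS : ∀ t, 0 ≤ S t) (hSlim : Tendsto S atTop (𝓝 0)) {a : ℕ → ℝ} (ha : ∀ n, 0 ≤ a n)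
    (hlim : Tendsto (fun n => ENNReal.ofReal (a n)) atTop (𝓝 (firstZero S))) :
    Tendsto (fun n => S (a n)) atTop (𝓝 0) := by
  rcases eq_or_ne (firstZero S) ∞ with h | h
  · rw [h] at hlim
    exact hSlim.comp (ENNReal.tendsto_ofReal_nhds_top.1 hlim)
  · have ha_lim : Tendsto a atTop (𝓝 (firstZero S).toReal) := by
      simpa [Function.comp_def, ENNReal.toReal_ofReal (ha _)] using
        (ENNReal.tendsto_toReal h).comp hlim
    simpa [Function.comp_def, apply_toReal_firstZero hScont hSanti hS h] using
      (hScont.tendsto _).comp ha_lim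

end FirstZero

def weightedMeasure (F : StieltjesFunction ℝ) (G : ℝ → ℝ) (τ : ℝ≥0∞) : Measure ℝ :=
  (F.measure.restrict {w | 0 < w ∧ ENNReal.ofReal w ≤ τ}).withDensity
    fun w => (ENNReal.ofReal (Function.leftLim G w))⁻¹

section WeightedMeasure

variable {F : StieltjesFunction ℝ} {G : ℝ → ℝ} {τ : ℝ≥0∞}

lemma weightedMeasure_apply {s : Set ℝ} (hs : MeasurableSet s) :
    weightedMeasure F G τ s = ∫⁻ w in s ∩ {w | 0 < w ∧ ENNReal.ofReal w ≤ τ},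
      (ENNReal.ofReal (Function.leftLim G w))⁻¹ ∂F.measure := by
  rw [weightedMeasure, withDensity_apply _ hs, Measure.restrict_restrict hs]

lemma weightedMeasure_le_ofReal_eq_zero (hF : Continuous F) :
    weightedMeasure F G τ {w | τ ≤ ENNReal.ofReal w} = 0 := by
  rw [weightedMeasure_apply (measurableSet_le measurable_const ENNReal.measurable_ofReal)]
  refine setLIntegral_measure_zero _ _ (measure_mono_null (t := {τ.toReal}) ?_ ?_)
  · rintro w ⟨hτw, hw0, hwτ⟩
    simp [← le_antisymm hwτ hτw, ENNReal.toReal_ofReal hw0.le]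
  · rw [F.measure_singleton, hF.continuousWithinAt.leftLim_eq, sub_self, ENNReal.ofReal_zero]

lemma ofReal_sq_mul_setLIntegral_le {S : ℝ → ℝ} (hSanti : Antitone S) (hS : ∀ t, 0 ≤ S t)
    {a m : ℝ} (ha : 0 ≤ a) (ham : a ≤ m) (hm : ENNReal.ofReal m ≤ τ) :
    ENNReal.ofReal (S m ^ 2) * ∫⁻ w in Ioc 0 m,
        (ENNReal.ofReal (S w ^ 2 * Function.leftLim G w))⁻¹ ∂F.measure ≤
      ENNReal.ofReal (S m ^ 2) * (ENNReal.ofReal (S a ^ 2))⁻¹ * weightedMeasure F G τ univ +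
        weightedMeasure F G τ (Ioi a) := by
  have hφ : Antitone fun w => ENNReal.ofReal (S w ^ 2) := fun x y h =>
    ENNReal.ofReal_le_ofReal (pow_le_pow_left₀ (hS y) (hSanti h) 2)
  simp_rw [ENNReal.inv_ofReal_mul (sq_nonneg _)]
  refine (mul_setLIntegral_Ioc_inv_mul_le hφ ha ham ENNReal.ofReal_ne_top).trans
    (add_le_add (mul_le_mul_right ?_ _) ?_)
  · rw [weightedMeasure_apply MeasurableSet.univ, univ_inter]
    exact lintegral_mono_set fun w hw =>
      ⟨hw.1, (ENNReal.ofReal_le_ofReal (hw.2.trans ham)).trans hm⟩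
  · rw [weightedMeasure_apply measurableSet_Ioi]
    exact lintegral_mono_set fun w hw =>
      ⟨hw.1, ha.trans_lt hw.1, (ENNReal.ofReal_le_ofReal hw.2).trans hm⟩

lemma ofReal_mul_setLIntegral_Ioc_min_le {S : ℝ → ℝ} (hSanti : Antitone S)
    (hS : ∀ t, 0 ≤ S t) {a t u v : ℝ} (ha : 0 ≤ a)
    (hat : a ≤ t) (htu : t < u) (htv : t < v) (hu : ENNReal.ofReal u ≤ τ) :
    ENNReal.ofReal (S u * S v) * ∫⁻ w in Ioc 0 (min u v),
        (ENNReal.ofReal (S w ^ 2 * Function.leftLim G w))⁻¹ ∂F.measure ≤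
      ENNReal.ofReal (S t ^ 2) * ((ENNReal.ofReal (S a ^ 2))⁻¹ * weightedMeasure F G τ univ) +
        weightedMeasure F G τ (Ioi a) := by
  have hm : ENNReal.ofReal (min u v) ≤ τ := (ENNReal.ofReal_le_ofReal (min_le_left u v)).trans hu
  have huv : S u * S v ≤ S (min u v) ^ 2 := by
    rw [sq]
    exact mul_le_mul (hSanti (min_le_left u v)) (hSanti (min_le_right u v)) (hS v) (hS _)
  have ht : S (min u v) ^ 2 ≤ S t ^ 2 :=
    pow_le_pow_left₀ (hS _) (hSanti (le_min htu.le htv.le)) 2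
  calc _ ≤ ENNReal.ofReal (S (min u v) ^ 2) * ∫⁻ w in Ioc 0 (min u v),
        (ENNReal.ofReal (S w ^ 2 * Function.leftLim G w))⁻¹ ∂F.measure := by
        gcongr
    _ ≤ _ := (ofReal_sq_mul_setLIntegral_le hSanti hS ha
        (hat.trans (le_min htu.le htv.le)) hm).trans_eq (by rw [mul_assoc])
    _ ≤ _ := by gcongr

end WeightedMeasure

theorem gamma_vanishes_at_endpoint_general
    (S : ℝ → ℝ) (hScont : Continuous S) (hSanti : Antitone S)
    (hSrange : ∀ t, 0 ≤ S t ∧ S t ≤ 1)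
    (hSlim : Tendsto S atTop (nhds 0))
    (G : ℝ → ℝ)
    (τ : ℝ≥0∞) (hτpos : 0 < τ)
    (hτ : τ = sInf {u : ℝ≥0∞ | ∃ r : ℝ, 0 ≤ r ∧ S r = 0 ∧ u = ENNReal.ofReal r})
    -- the Lebesgue–Stieltjes measure −dS, i.e. the measure of F = 1 − S
    (F : StieltjesFunction ℝ) (hF : ∀ x : ℝ, F x = 1 - S x)
    -- condition (C1): −∫₀^τ dS(w)/G(w−) < ∞
    (hC1 : ∫⁻ w in {w : ℝ | 0 < w ∧ ENNReal.ofReal w ≤ τ},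
        (ENNReal.ofReal (Function.leftLim G w))⁻¹ ∂F.measure < ⊤)
    (Γ : ℝ → ℝ → ℝ)
    (hΓ : ∀ u v : ℝ, Γ u v = S u * S v *
        (∫⁻ w in Ioc 0 (min u v),
          (ENNReal.ofReal (S w ^ 2 * Function.leftLim G w))⁻¹ ∂F.measure).toReal) :
    ∀ ε > (0 : ℝ), ∃ t₀ : ℝ, 0 ≤ t₀ ∧ ENNReal.ofReal t₀ < τ ∧
      ∀ u v : ℝ, t₀ < u → t₀ < v →
        ENNReal.ofReal u ≤ τ → ENNReal.ofReal v ≤ τ → |Γ u v| < ε := by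
  intro ε hε
  have hS t : 0 ≤ S t := (hSrange t).1
  replace hτ : τ = firstZero S := hτ
  have : IsFiniteMeasure (weightedMeasure F G τ) :=
    ⟨by rwa [weightedMeasure_apply MeasurableSet.univ, univ_inter]⟩
  have hFcont : Continuous F := by
    rw [show ⇑F = fun x => 1 - S x from funext hF]
    exact continuous_const.sub hScont
  obtain ⟨a, ha_mono, ha, ha_lim⟩ := ENNReal.exists_seq_ofReal_tendsto hτpos
  have hε2 : 0 < ENNReal.ofReal (ε / 2) := ENNReal.ofReal_pos.2 (half_pos hε)
  obtain ⟨i, hi⟩ := ((tendsto_measure_Ioi_of_tendsto_ofReal ha_mono ha_lim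
    (weightedMeasure_le_ofReal_eq_zero (G := G) hFcont)).eventually_lt_const hε2).exists
  set K := (ENNReal.ofReal (S (a i) ^ 2))⁻¹ * weightedMeasure F G τ univ
  have hK : K ≠ ∞ := ENNReal.mul_ne_top (ENNReal.inv_ne_top.2 (ENNReal.ofReal_pos.2
    (pow_pos (pos_of_ofReal_lt_firstZero hS (ha i).1.le (hτ ▸ (ha i).2)) 2)).ne')
    (measure_ne_top _ _)
  have hSK : Tendsto (fun n => ENNReal.ofReal (S (a n) ^ 2) * K) atTop (𝓝 0) := by
    have := tendsto_zero_of_tendsto_firstZero hScont hSanti hS hSlim (fun n => (ha n).1.le)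
      (hτ ▸ ha_lim)
    simpa using ENNReal.Tendsto.mul_const (ENNReal.tendsto_ofReal (this.pow 2)) (Or.inr hK)
  obtain ⟨j, hj, hij⟩ := ((hSK.eventually_lt_const hε2).and (eventually_ge_atTop i)).exists
  refine ⟨a j, (ha j).1.le, (ha j).2, fun u v hu hv huτ _ => ?_⟩
  rw [hΓ, ← ENNReal.toReal_ofReal (mul_nonneg (hS u) (hS v)), ← ENNReal.toReal_mul,
    abs_of_nonneg ENNReal.toReal_nonneg]
  refine ENNReal.toReal_lt_of_lt_ofReal ?_
  calc _ ≤ _ := ofReal_mul_setLIntegral_Ioc_min_le hSanti hS (ha i).1.le (ha_mono hij) hu hv huτ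
    _ < ENNReal.ofReal (ε / 2) + ENNReal.ofReal (ε / 2) := ENNReal.add_lt_add hj hi
    _ = ENNReal.ofReal ε := by
      rw [← ENNReal.ofReal_add (half_pos hε).le (half_pos hε).le, add_halves]

/-- with `Γ(u,v) = −S(u)S(v) ∫_{(0,u∧v]} dS(w)/(S(w)² G(w−))`, under the
condition `−∫₀^τ dS(w)/G(w−) < ∞` one has `Γ(u,v) → 0` as `u ∧ v ↑ τ`.  The Lebesgue–Stieltjes
measure `−dS` is the measure of the nondecreasing right-continuous function `F = 1 − S`. -/
theorem gamma_vanishes_at_endpoint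
    (S : ℝ → ℝ) (hScont : Continuous S) (hSanti : Antitone S)
    (hS0 : S 0 = 1) (hSneg : ∀ t ≤ (0 : ℝ), S t = 1)
    (hSrange : ∀ t, 0 ≤ S t ∧ S t ≤ 1)
    (hSlim : Tendsto S atTop (nhds 0))
    (G : ℝ → ℝ) (hGanti : AntitoneOn G (Ici 0))
    (hGrange : ∀ t ∈ Ici (0 : ℝ), 0 ≤ G t ∧ G t ≤ 1)
    (hGrc : ∀ t ∈ Ici (0 : ℝ), ContinuousWithinAt G (Ici t) t)
    (τ : ℝ≥0∞) (hτpos : 0 < τ)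
    (hτ : τ = sInf {u : ℝ≥0∞ | ∃ r : ℝ, 0 ≤ r ∧ S r = 0 ∧ u = ENNReal.ofReal r})
    -- the Lebesgue–Stieltjes measure −dS, i.e. the measure of F = 1 − S
    (F : StieltjesFunction ℝ) (hF : ∀ x : ℝ, F x = 1 - S x)
    -- condition (C1): −∫₀^τ dS(w)/G(w−) < ∞
    (hC1 : ∫⁻ w in {w : ℝ | 0 < w ∧ ENNReal.ofReal w ≤ τ},
        (ENNReal.ofReal (Function.leftLim G w))⁻¹ ∂F.measure < ⊤)
    (Γ : ℝ → ℝ → ℝ)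
    (hΓ : ∀ u v : ℝ, Γ u v = S u * S v *
        (∫⁻ w in Ioc 0 (min u v),
          (ENNReal.ofReal (S w ^ 2 * Function.leftLim G w))⁻¹ ∂F.measure).toReal) :
    ∀ ε > (0 : ℝ), ∃ t₀ : ℝ, 0 ≤ t₀ ∧ ENNReal.ofReal t₀ < τ ∧
      ∀ u v : ℝ, t₀ < u → t₀ < v →
        ENNReal.ofReal u ≤ τ → ENNReal.ofReal v ≤ τ → |Γ u v| < ε :=
  gamma_vanishes_at_endpoint_general S hScont hSanti hSrange hSlim G τ hτpos hτ F hF hC1 Γ hΓ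

end
end

section
/- For every β ∈ (0,1), almost surely: P( S*ₙ(t) ≤ β⁻¹ Ŝₙ(t) for all t ∈ [0, T*ₙ] | 𝐗 ) ≥ 1 − β. -/
/-!
Fix the data. At each death time `u`, the bootstrap Kaplan–Meier estimator jumps by the factor
`1 - K/Y*` and the original one by `1 - 1/Y`, where `Y` and `Y*` count the original and the
resampled observations at risk at `u` and `K` the resampled copies of the death. Given the part of
the resample lying below `u`, each of the `Y*` resampled observations at risk is uniform over the
`Y` original ones, so `K` has mean `Y*/Y` and the ratio of the two factors has mean one. Hence,
under the uniform law on the `nⁿ` resampling maps, `S*ₙ/Ŝₙ` is a martingale with mean one along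
the ordered observation times, and Ville's maximal inequality bounds the probability that it ever
exceeds `β⁻¹` by `β`. The factorisation needs each death time to differ from every other
observation, which holds almost surely because the `Tᵢ` have no atoms and all variables are
independent.
-/

noncomputable section

/-- The Kaplan–Meier estimator `Ŝₙ(t) = ∏_{i : X_{i:n} ≤ t} (1 - δ_{[i:n]}/(n-i+1))`. -/
def kmProd {n : ℕ} (x d : Fin n → ℝ) (t : ℝ) : ℝ :=
  ∏ i ∈ Finset.univ.filter (fun i : Fin n => x (Tuple.sort x i) ≤ t),
    (1 - d (Tuple.sort x i) / ((n : ℝ) - (i.1 : ℝ)))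

open Finset

section StoppedProduct

variable {ι : Type*} {c : ℝ} {F : ℕ → ι → ℝ}

variable (c F) in
def stoppedProd : ℕ → ι → ℝ
  | 0, _ => 1
  | k + 1, ω => if c < stoppedProd k ω then stoppedProd k ω else stoppedProd k ω * F k ω

lemma stoppedProd_nonneg (hF : ∀ k ω, 0 ≤ F k ω) (k : ℕ) (ω : ι) :
    0 ≤ stoppedProd c F k ω := by
  induction k with
  | zero => simp [stoppedProd]
  | succ k ih =>
    rw [stoppedProd]
    split_ifs
    exacts [ih, mul_nonneg ih (hF k ω)]

lemma lt_stoppedProd_of_le {k m : ℕ} {ω : ι} (h : c < stoppedProd c F k ω) (hkm : k ≤ m) :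
    c < stoppedProd c F m ω := by
  induction m, hkm using Nat.le_induction with
  | base => exact h
  | succ m _ ih => rwa [stoppedProd, if_pos ih]

lemma lt_stoppedProd_or_eq_prod (k : ℕ) (ω : ι) :
    c < stoppedProd c F k ω ∨ stoppedProd c F k ω = ∏ l ∈ range k, F l ω := by
  induction k with
  | zero => simp [stoppedProd]
  | succ k ih =>
    by_cases h : c < stoppedProd c F k ω
    · left; rwa [stoppedProd, if_pos h]
    · right; rw [stoppedProd, if_neg h, prod_range_succ, ih.resolve_left h]

lemma lt_stoppedProd_of_lt_prod {k m : ℕ} {ω : ι} (h : c < ∏ l ∈ range k, F l ω)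
    (hkm : k ≤ m) : c < stoppedProd c F m ω :=
  lt_stoppedProd_of_le ((lt_stoppedProd_or_eq_prod k ω).elim id (· ▸ h)) hkm

lemma stoppedProd_congr {k : ℕ} {ω ω' : ι} (h : ∀ l < k, F l ω = F l ω') :
    stoppedProd c F k ω = stoppedProd c F k ω' := by
  induction k with
  | zero => rfl
  | succ k ih => simp only [stoppedProd, ih fun l hl => h l (by omega), h k k.lt_succ_self]

variable [Fintype ι] {α : Type*} [DecidableEq α] {m : ℕ} {L : Fin m → ι → α}

lemma sum_stoppedProd
    (hL : ∀ k : Fin m, ∀ l < (k : ℕ), ∀ ω ω', L k ω = L k ω' → F l ω = F l ω')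
    (hfair : ∀ (k : Fin m) ω₀, ∑ ω with L k ω = L k ω₀, F k ω = #{ω | L k ω = L k ω₀}) :
    ∑ ω, stoppedProd c F m ω = Fintype.card ι := by
  suffices ∀ k ≤ m, ∑ ω, stoppedProd c F k ω = Fintype.card ι from this m le_rfl
  intro k hk
  induction k with
  | zero => simp [stoppedProd]
  | succ k ih =>
    let K : Fin m := ⟨k, hk⟩
    have hmaps : ∀ ω ∈ (univ : Finset ι), L K ω ∈ univ.image (L K) := fun ω _ =>
      mem_image_of_mem _ (mem_univ ω)
    rw [← ih (by omega), ← sum_fiberwise_of_maps_to hmaps, ← sum_fiberwise_of_maps_to hmaps]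
    refine sum_congr rfl fun a ha => ?_
    obtain ⟨ω₀, -, rfl⟩ := mem_image.mp ha
    have hconst : ∀ ω ∈ ({ω | L K ω = L K ω₀} : Finset ι),
        stoppedProd c F k ω = stoppedProd c F k ω₀ := fun ω hω =>
      stoppedProd_congr fun l hl => hL K l hl ω ω₀ (mem_filter.mp hω).2
    by_cases hstop : c < stoppedProd c F k ω₀
    · refine sum_congr rfl fun ω hω => ?_
      rw [stoppedProd, if_pos (hconst ω hω ▸ hstop)]
    · rw [sum_congr rfl hconst, sum_congr rfl fun ω hω => by
        rw [stoppedProd, hconst ω hω, if_neg hstop], ← mul_sum, hfair K ω₀, sum_const,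
        nsmul_eq_mul, mul_comm]

/-- Ville's maximal inequality for a product of fair factors on a finite uniform space. -/
theorem mul_card_exists_lt_prod_le_card (hF : ∀ k ω, 0 ≤ F k ω)
    (hL : ∀ k : Fin m, ∀ l < (k : ℕ), ∀ ω ω', L k ω = L k ω' → F l ω = F l ω')
    (hfair : ∀ (k : Fin m) ω₀, ∑ ω with L k ω = L k ω₀, F k ω = #{ω | L k ω = L k ω₀}) :
    c * #{ω | ∃ k ≤ m, c < ∏ l ∈ range k, F l ω} ≤ Fintype.card ι := by
  calc c * #{ω | ∃ k ≤ m, c < ∏ l ∈ range k, F l ω}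
      = ∑ ω with ∃ k ≤ m, c < ∏ l ∈ range k, F l ω, c := by
        rw [sum_const, nsmul_eq_mul, mul_comm]
    _ ≤ ∑ ω with ∃ k ≤ m, c < ∏ l ∈ range k, F l ω, stoppedProd c F m ω := by
      refine sum_le_sum fun ω hω => ?_
      obtain ⟨k, hkm, hk⟩ := (mem_filter.mp hω).2
      exact (lt_stoppedProd_of_lt_prod hk hkm).le
    _ ≤ ∑ ω, stoppedProd c F m ω :=
      sum_le_sum_of_subset_of_nonneg (filter_subset _ _) fun ω _ _ => stoppedProd_nonneg hF m ω
    _ = Fintype.card ι := sum_stoppedProd hL hfair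

end StoppedProduct

lemma Fin.mem_iff_lt_card_of_isLowerSet {n : ℕ} {s : Finset (Fin n)}
    (hs : IsLowerSet (s : Set (Fin n))) (i : Fin n) : i ∈ s ↔ (i : ℕ) < #s := by
  rcases hs.eq_univ_or_Iio with h | ⟨a, h⟩
  · rw [coe_eq_univ.mp h]
    simp
  · rw [← coe_Iio, coe_inj] at h
    subst h
    simp

lemma Fin.map_valEmbedding_filter_val_mem {n : ℕ} {s : Finset ℕ} (hs : s ⊆ range n) :
    ({i : Fin n | i.val ∈ s} : Finset (Fin n)).map Fin.valEmbedding = s := by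
  ext l
  simp only [mem_map, mem_filter, mem_univ, true_and, Fin.valEmbedding_apply]
  exact ⟨fun ⟨i, hi, hil⟩ => hil ▸ hi, fun hl => ⟨⟨l, mem_range.mp (hs hl)⟩, hl, rfl⟩⟩

lemma Fin.prod_filter_val_mem {M : Type*} [CommMonoid M] {n : ℕ} {s : Finset ℕ}
    (hs : s ⊆ range n) (f : ℕ → M) :
    ∏ i ∈ ({i | i.val ∈ s} : Finset (Fin n)), f i = ∏ l ∈ s, f l := by
  conv_rhs => rw [← Fin.map_valEmbedding_filter_val_mem hs, prod_map]
  rfl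

lemma prod_Ico_one_sub_inv {n p q : ℕ} (hpn : p < n) (hpq : p ≤ q) (hqn : q ≤ n) :
    ∏ s ∈ Ico p q, (1 - 1 / ((n : ℝ) - s)) = (n - q) / (n - p) := by
  have hp : (n : ℝ) - p ≠ 0 := sub_ne_zero.mpr (by exact_mod_cast hpn.ne')
  induction q, hpq using Nat.le_induction with
  | base => simp [div_self hp]
  | succ q hpq ih =>
    have hq : (n : ℝ) - q ≠ 0 := sub_ne_zero.mpr (by exact_mod_cast (by omega : n ≠ q))
    rw [prod_Ico_succ_top hpq, ih (by omega)]
    field_simp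
    push_cast
    ring

lemma Tuple.pred_sort_iff_lt_card {n : ℕ} {α : Type*} [LinearOrder α] (x : Fin n → α)
    (p : α → Prop) [DecidablePred p] (hp : ∀ a b, a ≤ b → p b → p a) (i : Fin n) :
    p (x (Tuple.sort x i)) ↔ (i : ℕ) < #{a | p (x a)} := by
  have hlower : IsLowerSet ((({i | p (x (Tuple.sort x i))} : Finset (Fin n))) : Set (Fin n)) :=
    fun i j hji hi => by simpa using hp _ _ (Tuple.monotone_sort x hji) (by simpa using hi)
  rw [← card_equiv (Tuple.sort x) (s := {i | p (x (Tuple.sort x i))}) fun i => by simp]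
  simpa using Fin.mem_iff_lt_card_of_isLowerSet hlower i

lemma Tuple.prod_filter_le_eq_prod_range {n : ℕ} {α M : Type*} [LinearOrder α] [CommMonoid M]
    (x : Fin n → α) (g : Fin n → M) (t : α) : ∏ b with x b ≤ t, g b =
      ∏ l ∈ range #{a | x a ≤ t}, if h : l < n then g (Tuple.sort x ⟨l, h⟩) else 1 := by
  have hk : range #{a | x a ≤ t} ⊆ range n :=
    range_subset_range.mpr ((card_filter_le _ _).trans (by simp))
  rw [← prod_equiv (Tuple.sort x) (s := {i | x (Tuple.sort x i) ≤ t}) (by simp) fun _ _ => rfl,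
    ← Fin.prod_filter_val_mem hk]
  refine prod_congr (filter_congr fun i _ => ?_) fun i _ => by simp
  rw [mem_range]
  exact Tuple.pred_sort_iff_lt_card x (· ≤ t) (fun _ _ => le_trans) i

section DistinctTimes

variable {n : ℕ} (x : Fin n → ℝ) (v : ℝ)

def atRisk : ℕ := #{a | v ≤ x a}

lemma atRisk_eq_sub : atRisk x v = n - #{a | x a < v} := by
  have := card_filter_add_card_filter_not (s := univ) (fun a => x a < v)
  simp only [not_lt, card_univ, Fintype.card_fin] at this
  rw [atRisk]
  omega

lemma card_le_eq_card_lt_add_card_eq : #{a | x a ≤ v} = #{a | x a < v} + #{a | x a = v} := by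
  rw [← card_union_of_disjoint (disjoint_filter.mpr fun a _ h => h.ne), ← filter_or]
  simp_rw [le_iff_lt_or_eq]

lemma sort_eq_iff_mem_Ico (i : Fin n) :
    x (Tuple.sort x i) = v ↔ i.val ∈ Ico #{a | x a < v} #{a | x a ≤ v} := by
  rw [mem_Ico, ← not_lt (a := i.val), ← Tuple.pred_sort_iff_lt_card x (· < v)
    (fun _ _ h h' => h.trans_lt h'), ← Tuple.pred_sort_iff_lt_card x (· ≤ v) fun _ _ => le_trans]
  exact ⟨fun h => ⟨h.not_lt, h.le⟩, fun h => le_antisymm h.2 (not_lt.mp h.1)⟩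

theorem kmProd_eq_prod_image (d : Fin n → ℝ) (hd : ∀ a, d a = 0 ∨ d a = 1)
    (hties : ∀ a b, x a = x b → d a = d b) (t : ℝ) :
    kmProd x d t =
      ∏ v ∈ univ.image x with v ≤ t, (1 - (∑ a with x a = v, d a) / atRisk x v) := by
  rw [kmProd]
  set σ := Tuple.sort x
  rw [← prod_fiberwise_of_maps_to (g := fun i => x (σ i))
    (t := {v ∈ univ.image x | v ≤ t}) fun i hi => by simpa using hi]
  refine prod_congr rfl fun v hv => ?_
  obtain ⟨a₀, rfl⟩ : ∃ a₀, x a₀ = v := by simpa using (mem_filter.mp hv).1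
  have hsplit := card_le_eq_card_lt_add_card_eq x (x a₀)
  have hqn : #{a | x a ≤ x a₀} ≤ n := (card_filter_le _ _).trans (by simp)
  have hcount_pos : 0 < #{a | x a = x a₀} := card_pos.mpr ⟨a₀, by simp⟩
  set p := #{a | x a < x a₀}
  set q := #{a | x a ≤ x a₀}
  have hpq : p < q := by omega
  have hpos : ∀ i, x (σ i) = x a₀ ↔ i.val ∈ Ico p q := sort_eq_iff_mem_Ico x (x a₀)
  have hfiber : ({i | x (σ i) ≤ t} : Finset (Fin n)).filter (fun i => x (σ i) = x a₀) =
      ({i | i.val ∈ Ico p q} : Finset (Fin n)) := by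
    ext i
    simp only [mem_filter, mem_univ, true_and, ← hpos]
    exact ⟨And.right, fun h => ⟨h.le.trans (mem_filter.mp hv).2, h⟩⟩
  rcases hd a₀ with h0 | h1
  · have hzero : ∀ a ∈ ({a | x a = x a₀} : Finset (Fin n)), d a = 0 := fun a ha =>
      (hties a a₀ (mem_filter.mp ha).2).trans h0
    rw [sum_eq_zero hzero, zero_div, sub_zero]
    exact prod_eq_one fun i hi => by rw [hzero _ (by simpa using (mem_filter.mp hi).2)]; simp
  · have hone : ∀ a ∈ ({a | x a = x a₀} : Finset (Fin n)), d a = 1 := fun a ha =>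
      (hties a a₀ (mem_filter.mp ha).2).trans h1
    have hIco : Ico p q ⊆ range n := fun l hl => mem_range.mpr ((mem_Ico.mp hl).2.trans_le hqn)
    -- the tied deaths occupy the sorted positions `p, …, q - 1`, whose factors telescope
    rw [hfiber, prod_congr rfl fun i hi => by rw [hone _ (by simpa [hpos] using hi)],
      Fin.prod_filter_val_mem hIco fun l => 1 - 1 / ((n : ℝ) - l),
      prod_Ico_one_sub_inv (hpq.trans_le hqn) hpq.le hqn, sum_congr rfl hone, sum_const,
      nsmul_one, atRisk_eq_sub, Nat.cast_sub (hpq.trans_le hqn).le,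
      show #{a | x a = x a₀} = q - p by omega, Nat.cast_sub hpq.le]
    have : (n : ℝ) - p ≠ 0 := sub_ne_zero.mpr (by exact_mod_cast (hpq.trans_le hqn).ne')
    field_simp
    ring

end DistinctTimes

/-- Ratio of the bootstrap to the original Kaplan–Meier factor at a death time, when `k` of the
`y` resampled observations at risk are copies of the death and `r` original observations are at
risk. -/
def kmRatio (k y r : ℕ) : ℝ := if y = 0 ∨ r ≤ 1 then 1 else (1 - k / y) / (1 - 1 / r)

lemma kmRatio_of_degenerate {k y r : ℕ} (h : y = 0 ∨ r ≤ 1) : kmRatio k y r = 1 := if_pos h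

lemma kmRatio_of_not_degenerate {k y r : ℕ} (h : ¬(y = 0 ∨ r ≤ 1)) :
    kmRatio k y r = (1 - k / y) / (1 - 1 / r) := if_neg h

lemma kmRatio_nonneg {k y : ℕ} (hky : k ≤ y) (r : ℕ) : 0 ≤ kmRatio k y r := by
  unfold kmRatio
  split_ifs with h
  · exact zero_le_one
  · rw [not_or, not_le] at h
    have hy : (0 : ℝ) < y := by exact_mod_cast Nat.pos_of_ne_zero h.1
    have hr : (1 : ℝ) < r := by exact_mod_cast h.2
    refine div_nonneg (sub_nonneg.mpr ((div_le_one hy).mpr (by exact_mod_cast hky)))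
      (sub_nonneg.mpr ((div_le_one (by linarith)).mpr hr.le))

section Resampling

variable {n : ℕ} {x d : Fin n → ℝ}

def copies (j : Fin n → Fin n) (b : Fin n) : ℕ := #{a | j a = b}

lemma copies_id (b : Fin n) : copies id b = 1 := by
  simp [copies, filter_eq']

lemma copies_le_atRisk (j : Fin n → Fin n) (b : Fin n) : copies j b ≤ atRisk (x ∘ j) (x b) :=
  card_le_card fun a ha => by simp_all

variable (x d) in
def kmFactor (j : Fin n → Fin n) (b : Fin n) : ℝ :=
  if d b = 1 then 1 - (copies j b : ℝ) / atRisk (x ∘ j) (x b) else 1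

lemma kmFactor_nonneg (j : Fin n → Fin n) (b : Fin n) : 0 ≤ kmFactor x d j b := by
  unfold kmFactor
  split_ifs
  · exact sub_nonneg.mpr (div_le_one_of_le₀ (by exact_mod_cast copies_le_atRisk j b)
      (Nat.cast_nonneg _))
  · exact zero_le_one

lemma status_eq_of_time_eq (hd : ∀ a, d a = 0 ∨ d a = 1)
    (huniq : ∀ a b, d a = 1 → x a = x b → a = b) {a b : Fin n} (h : x a = x b) : d a = d b := by
  rcases hd a with ha | ha
  · rcases hd b with hb | hb
    · rw [ha, hb]
    · rw [huniq b a hb h.symm]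
  · rw [huniq a b ha h]

theorem kmProd_comp_eq_prod (hd : ∀ a, d a = 0 ∨ d a = 1)
    (huniq : ∀ a b, d a = 1 → x a = x b → a = b) (j : Fin n → Fin n) (t : ℝ) :
    kmProd (x ∘ j) (d ∘ j) t = ∏ b with x b ≤ t, kmFactor x d j b := by
  have hdeaths : ∀ b, d b = 1 → ∑ a with (x ∘ j) a = x b, (d ∘ j) a = copies j b := by
    intro b hb
    rw [copies, sum_congr rfl fun a ha => show (d ∘ j) a = if j a = b then 1 else 0 by
      split_ifs with hab
      · rw [Function.comp_apply, hab, hb]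
      · exact (hd (j a)).resolve_right fun h => hab (huniq _ _ h (mem_filter.mp ha).2),
      sum_boole, filter_filter]
    congr 2
    exact filter_congr fun a _ => ⟨And.right, fun h => ⟨by simp [h], h⟩⟩
  rw [kmProd_eq_prod_image (x ∘ j) (d ∘ j) (fun a => hd (j a)) fun a b =>
    status_eq_of_time_eq hd huniq]
  symm
  refine prod_bij_ne_one (fun b _ _ => x b) ?_ ?_ ?_ ?_
  · intro b hb hfb
    rw [kmFactor] at hfb
    have hdb : d b = 1 := by by_contra h; simp [h] at hfb
    obtain ⟨a, -, rfl⟩ : ∃ a ∈ univ, j a = b := by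
      by_contra! h
      simp [hdb, copies, filter_false_of_mem fun a _ => h a (mem_univ a)] at hfb
    simpa using (mem_filter.mp hb).2
  · intro b₁ _ hfb₁ b₂ _ _ h
    exact huniq b₁ b₂ (by by_contra h; simp [kmFactor, h] at hfb₁) h
  · intro v hv hgv
    obtain ⟨a, ha, hda⟩ := exists_ne_zero_of_sum_ne_zero fun h : ∑ a with (x ∘ j) a = v,
      (d ∘ j) a = 0 => hgv (by rw [h, zero_div, sub_zero])
    have hxv : x (j a) = v := (mem_filter.mp ha).2
    have hdja : d (j a) = 1 := (hd (j a)).resolve_left hda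
    refine ⟨j a, by simpa [hxv] using (mem_filter.mp hv).2, ?_, hxv⟩
    rwa [kmFactor, if_pos hdja, ← hdeaths _ hdja, hxv]
  · intro b _ hfb
    rw [kmFactor] at hfb ⊢
    have hdb : d b = 1 := by by_contra h; simp [h] at hfb
    rw [if_pos hdb, hdeaths b hdb]

variable (x d) in
def deathRatio (j : Fin n → Fin n) (b : Fin n) : ℝ :=
  if d b = 1 then kmRatio (copies j b) (atRisk (x ∘ j) (x b)) (atRisk x (x b)) else 1

lemma deathRatio_nonneg (j : Fin n → Fin n) (b : Fin n) : 0 ≤ deathRatio x d j b := by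
  unfold deathRatio
  split_ifs
  exacts [kmRatio_nonneg (copies_le_atRisk j b) _, zero_le_one]

lemma kmFactor_le_deathRatio_mul (j : Fin n → Fin n) {b : Fin n} (hrisk : ∃ a, x b ≤ x (j a)) :
    kmFactor x d j b ≤ deathRatio x d j b * kmFactor x d id b := by
  unfold kmFactor deathRatio
  split_ifs with hdb
  swap
  · rw [one_mul]
  obtain ⟨a, ha⟩ := hrisk
  have hy : atRisk (x ∘ j) (x b) ≠ 0 := (card_pos.mpr ⟨a, by simpa using ha⟩).ne'
  have hr : 1 ≤ atRisk x (x b) := card_pos.mpr ⟨b, by simp⟩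
  by_cases hr1 : atRisk x (x b) ≤ 1
  · -- only `b` is at risk at `x b`, so every resampled observation at risk is a copy of `b`
    have hcopies : copies j b = atRisk (x ∘ j) (x b) := by
      refine (copies_le_atRisk j b).antisymm (card_le_card fun a ha => ?_)
      simp only [mem_filter, mem_univ, true_and, Function.comp_apply] at ha ⊢
      exact card_le_one.mp hr1 _ (by simpa using ha) _ (by simp)
    rw [kmRatio_of_degenerate (Or.inr hr1), hcopies, div_self (by exact_mod_cast hy),
      copies_id, Function.comp_id, le_antisymm hr1 hr]
    norm_num
  · have hr1' : (1 : ℝ) < atRisk x (x b) := by exact_mod_cast lt_of_not_ge hr1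
    have hden : (1 : ℝ) - 1 / atRisk x (x b) ≠ 0 :=
      (sub_pos.mpr ((div_lt_one (by linarith)).mpr hr1')).ne'
    rw [kmRatio_of_not_degenerate (by tauto), copies_id, Nat.cast_one, Function.comp_id,
      div_mul_cancel₀ _ hden]

lemma lt_prod_deathRatio (hd : ∀ a, d a = 0 ∨ d a = 1)
    (huniq : ∀ a b, d a = 1 → x a = x b → a = b) (j : Fin n → Fin n) {c t : ℝ}
    (hrisk : ∀ b, x b ≤ t → ∃ a, x b ≤ x (j a))
    (h : c * kmProd x d t < kmProd (x ∘ j) (d ∘ j) t) :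
    c < ∏ b with x b ≤ t, deathRatio x d j b := by
  rw [kmProd_comp_eq_prod hd huniq] at h
  rw [show kmProd x d t = kmProd (x ∘ id) (d ∘ id) t from rfl,
    kmProd_comp_eq_prod hd huniq] at h
  have hle : ∏ b with x b ≤ t, kmFactor x d j b ≤
      (∏ b with x b ≤ t, deathRatio x d j b) * ∏ b with x b ≤ t, kmFactor x d id b := by
    rw [← prod_mul_distrib]
    exact prod_le_prod (fun b _ => kmFactor_nonneg j b)
      fun b hb => kmFactor_le_deathRatio_mul j (hrisk b (mem_filter.mp hb).2)
  exact lt_of_mul_lt_mul_right (h.trans_le hle) (prod_nonneg fun b _ => kmFactor_nonneg id b)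

section Filtration

variable (x) in
/-- The resample `j` observed strictly below `v`; `none` marks an observation at risk at `v`. -/
def resampleBelow (v : ℝ) (j : Fin n → Fin n) (a : Fin n) : Option (Fin n) :=
  if v ≤ x (j a) then none else some (j a)

lemma resampleBelow_eq_some {v : ℝ} {b : Fin n} (hb : x b < v) (j : Fin n → Fin n) (a : Fin n) :
    resampleBelow x v j a = some b ↔ j a = b := by
  unfold resampleBelow
  split_ifs with h
  · simp only [false_iff]
    rintro rfl
    exact lt_irrefl v (h.trans_lt hb)
  · exact Option.some_inj

lemma le_iff_resampleBelow {v w : ℝ} (hwv : w ≤ v) (j : Fin n → Fin n) (a : Fin n) :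
    w ≤ x (j a) ↔ (resampleBelow x v j a).elim True (w ≤ x ·) := by
  unfold resampleBelow
  split_ifs with h
  · exact iff_of_true (hwv.trans h) trivial
  · rfl

variable {v : ℝ} {j j' : Fin n → Fin n}

lemma copies_eq_of_resampleBelow_eq (h : resampleBelow x v j = resampleBelow x v j') {b : Fin n}
    (hb : x b < v) : copies j b = copies j' b := by
  simp only [copies, ← resampleBelow_eq_some hb, h]

lemma atRisk_eq_of_resampleBelow_eq (h : resampleBelow x v j = resampleBelow x v j') {w : ℝ}
    (hwv : w ≤ v) : atRisk (x ∘ j) w = atRisk (x ∘ j') w := by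
  unfold atRisk
  congr 1
  ext a
  simp only [mem_filter, mem_univ, true_and, Function.comp_apply]
  rw [le_iff_resampleBelow hwv, le_iff_resampleBelow hwv, h]

lemma deathRatio_eq_of_resampleBelow_eq (h : resampleBelow x v j = resampleBelow x v j')
    {b : Fin n} (hb : x b < v) : deathRatio x d j b = deathRatio x d j' b := by
  rw [deathRatio, deathRatio, copies_eq_of_resampleBelow_eq h hb,
    atRisk_eq_of_resampleBelow_eq h hb.le]

end Filtration

lemma filter_resampleBelow_eq_piFinset (v : ℝ) (j₀ : Fin n → Fin n) :
    ({j | resampleBelow x v j = resampleBelow x v j₀} : Finset (Fin n → Fin n)) =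
      Fintype.piFinset fun a =>
        if v ≤ x (j₀ a) then ({b | v ≤ x b} : Finset (Fin n)) else {j₀ a} := by
  ext j
  simp only [mem_filter, mem_univ, true_and, Fintype.mem_piFinset, funext_iff]
  refine forall_congr' fun a => ?_
  unfold resampleBelow
  split_ifs <;> simp_all
  intro h
  linarith [h ▸ ‹v ≤ x (j a)›]

/-- Given the resample below `v`, each resampled observation at risk at `v` is uniform over the
`atRisk x v` original ones. -/
lemma sum_copies_mul_atRisk {v : ℝ} (j₀ : Fin n → Fin n) {b : Fin n} (hb : x b = v) :
    (∑ j with resampleBelow x v j = resampleBelow x v j₀, copies j b) * atRisk x v =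
      atRisk (x ∘ j₀) v * #{j | resampleBelow x v j = resampleBelow x v j₀} := by
  set t : Fin n → Finset (Fin n) := fun a =>
    if v ≤ x (j₀ a) then ({b | v ≤ x b} : Finset (Fin n)) else {j₀ a}
  have hmem : ∀ a, b ∈ t a ↔ v ≤ x (j₀ a) := fun a => by
    simp only [t]
    split_ifs with h
    · simp [h, hb.ge]
    · simp only [mem_singleton, h, iff_false]
      rintro rfl
      exact h hb.ge
  have hcount : ∀ a, #{j ∈ Fintype.piFinset t | j a = b} * atRisk x v =
      if v ≤ x (j₀ a) then #(Fintype.piFinset t) else 0 := fun a => by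
    rw [Fintype.card_filter_piFinset_eq t a b]
    by_cases h : v ≤ x (j₀ a)
    · rw [if_pos ((hmem a).mpr h), if_pos h, Fintype.card_piFinset,
        ← prod_erase_mul _ _ (mem_univ a)]
      simp [t, h, atRisk]
    · rw [if_neg (mt (hmem a).mp h), if_neg h, zero_mul]
  rw [filter_resampleBelow_eq_piFinset]
  calc (∑ j ∈ Fintype.piFinset t, copies j b) * atRisk x v
      = ∑ a, #{j ∈ Fintype.piFinset t | j a = b} * atRisk x v := by
        simp only [copies, card_filter, sum_mul]
        rw [sum_comm]
    _ = atRisk (x ∘ j₀) v * #(Fintype.piFinset t) := by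
        rw [sum_congr rfl fun a _ => hcount a, ← sum_filter, sum_const, smul_eq_mul]
        rfl

lemma sum_deathRatio_fiber (j₀ : Fin n → Fin n) (b : Fin n) :
    ∑ j with resampleBelow x (x b) j = resampleBelow x (x b) j₀, deathRatio x d j b =
      #{j | resampleBelow x (x b) j = resampleBelow x (x b) j₀} := by
  set Φ : Finset (Fin n → Fin n) := {j | resampleBelow x (x b) j = resampleBelow x (x b) j₀}
  by_cases hdb : d b = 1
  swap
  · simp [deathRatio, hdb, Φ]
  have hy : ∀ j ∈ Φ, atRisk (x ∘ j) (x b) = atRisk (x ∘ j₀) (x b) := fun j hj =>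
    atRisk_eq_of_resampleBelow_eq (mem_filter.mp hj).2 le_rfl
  rw [sum_congr rfl fun j hj => by rw [deathRatio, if_pos hdb, hy j hj]]
  set y := atRisk (x ∘ j₀) (x b)
  set r := atRisk x (x b)
  by_cases hdeg : y = 0 ∨ r ≤ 1
  · rw [sum_congr rfl fun j _ => kmRatio_of_degenerate hdeg, sum_const, nsmul_one]
  rw [sum_congr rfl fun j _ => kmRatio_of_not_degenerate hdeg]
  rw [not_or, not_le] at hdeg
  have hy0 : (y : ℝ) ≠ 0 := by exact_mod_cast hdeg.1
  have hr0 : (r : ℝ) ≠ 0 := by exact_mod_cast (zero_lt_one.trans hdeg.2).ne'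
  have hr1 : (r : ℝ) - 1 ≠ 0 := sub_ne_zero.mpr (by exact_mod_cast hdeg.2.ne')
  have hsum : ∑ j ∈ Φ, (copies j b : ℝ) = y * #Φ / r := by
    rw [eq_div_iff hr0]
    exact_mod_cast sum_copies_mul_atRisk j₀ rfl
  rw [← sum_div, sum_sub_distrib, ← sum_div, sum_const, nsmul_one, hsum]
  field_simp

lemma deathRatio_sort_eq_of_resampleBelow_eq (huniq : ∀ a b, d a = 1 → x a = x b → a = b)
    {k l : Fin n} (hlk : l < k) {j j' : Fin n → Fin n}
    (h : resampleBelow x (x (Tuple.sort x k)) j = resampleBelow x (x (Tuple.sort x k)) j') :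
    deathRatio x d j (Tuple.sort x l) = deathRatio x d j' (Tuple.sort x l) := by
  by_cases hdl : d (Tuple.sort x l) = 1
  · refine deathRatio_eq_of_resampleBelow_eq h ((Tuple.monotone_sort x hlk.le).lt_of_ne ?_)
    exact fun heq => hlk.ne ((Tuple.sort x).injective (huniq _ _ hdl heq))
  · simp [deathRatio, hdl]

variable (x d) in
def sortedDeathRatio (l : ℕ) (j : Fin n → Fin n) : ℝ :=
  if h : l < n then deathRatio x d j (Tuple.sort x ⟨l, h⟩) else 1

lemma mul_card_exists_lt_prod_sortedDeathRatio_le (huniq : ∀ a b, d a = 1 → x a = x b → a = b)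
    (c : ℝ) : c * #{j | ∃ k ≤ n, c < ∏ l ∈ range k, sortedDeathRatio x d l j} ≤ (n : ℝ) ^ n := by
  have := mul_card_exists_lt_prod_le_card (c := c) (F := sortedDeathRatio x d)
    (L := fun k j => resampleBelow x (x (Tuple.sort x k)) j)
    (fun l j => by
      unfold sortedDeathRatio
      split_ifs
      exacts [deathRatio_nonneg j _, zero_le_one])
    (fun k l hlk j j' h => by
      simp only [sortedDeathRatio, dif_pos (hlk.trans k.2)]
      exact deathRatio_sort_eq_of_resampleBelow_eq huniq (k := k) (l := ⟨l, _⟩) hlk h)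
    (fun k j₀ => by simpa [sortedDeathRatio, k.2] using sum_deathRatio_fiber j₀ (Tuple.sort x k))
  simpa using this

lemma exists_lt_prod_sortedDeathRatio (hd : ∀ a, d a = 0 ∨ d a = 1)
    (huniq : ∀ a b, d a = 1 → x a = x b → a = b) {j : Fin n → Fin n} {c t : ℝ}
    (hts : t ≤ sSup (Set.range (x ∘ j))) (h : c * kmProd x d t < kmProd (x ∘ j) (d ∘ j) t) :
    ∃ k ≤ n, c < ∏ l ∈ range k, sortedDeathRatio x d l j := by
  refine ⟨#{a | x a ≤ t}, (card_filter_le _ _).trans (by simp), ?_⟩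
  have hrisk : ∀ b, x b ≤ t → ∃ a, x b ≤ x (j a) := fun b hb => by
    have : Nonempty (Fin n) := ⟨b⟩
    obtain ⟨a, ha⟩ := exists_eq_ciSup_of_finite (f := x ∘ j)
    exact ⟨a, hb.trans (hts.trans ha.ge)⟩
  have := lt_prod_deathRatio hd huniq j hrisk h
  rwa [Tuple.prod_filter_le_eq_prod_range] at this

theorem one_sub_le_ncard_kmProd_resample_le_div (hd : ∀ a, d a = 0 ∨ d a = 1)
    (huniq : ∀ a b, d a = 1 → x a = x b → a = b) {β : ℝ} (hβ : 0 < β) :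
    1 - β ≤ (Set.ncard {j : Fin n → Fin n | ∀ t : ℝ, 0 ≤ t →
        t ≤ sSup (Set.range fun i => x (j i)) →
        kmProd (fun i => x (j i)) (fun i => d (j i)) t ≤ β⁻¹ * kmProd x d t} : ℝ) /
      (n : ℝ) ^ n := by
  classical
  let good : (Fin n → Fin n) → Prop := fun j => ∀ t : ℝ, 0 ≤ t →
    t ≤ sSup (Set.range fun i => x (j i)) →
    kmProd (fun i => x (j i)) (fun i => d (j i)) t ≤ β⁻¹ * kmProd x d t
  change 1 - β ≤ (Set.ncard {j | good j} : ℝ) / (n : ℝ) ^ n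
  have hsplit : (#{j | good j} : ℝ) + #{j | ¬ good j} = (n : ℝ) ^ n := by
    exact_mod_cast (card_filter_add_card_filter_not _).trans (by simp)
  have hbad : (#{j | ¬ good j} : ℝ) ≤ β * (n : ℝ) ^ n := by
    have hsub : #{j | ¬ good j} ≤ #{j | ∃ k ≤ n, β⁻¹ < ∏ l ∈ range k, sortedDeathRatio x d l j} :=
      card_le_card <| monotone_filter_right _ fun j _ hj => by
        simp only [good, not_forall, not_le] at hj
        obtain ⟨t, -, hts, hlt⟩ := hj
        exact exists_lt_prod_sortedDeathRatio hd huniq hts hlt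
    rw [← inv_mul_le_iff₀ hβ]
    exact (mul_le_mul_of_nonneg_left (by exact_mod_cast hsub) (inv_nonneg.mpr hβ.le)).trans
      (mul_card_exists_lt_prod_sortedDeathRatio_le huniq β⁻¹)
  rw [Set.ncard_eq_toFinset_card', Set.toFinset_ofPred,
    le_div_iff₀ (by exact_mod_cast Nat.pow_self_pos)]
  linarith

end Resampling

section Survival

open MeasureTheory ProbabilityTheory

variable {Ω : Type*} [MeasurableSpace Ω] {P : Measure Ω}

lemma nullSingletonClass_map_of_continuous_survival [IsProbabilityMeasure P] {X : Ω → ℝ}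
    (hX : Measurable X) {S : ℝ → ℝ} (hS : ∀ t, S t = (P {ω | t < X ω}).toReal)
    (hScont : Continuous S) :
    NullSingletonClass (P.map X) := by
  have := Measure.isProbabilityMeasure_map (μ := P) hX.aemeasurable
  have hcdf : ⇑(cdf (P.map X)) = fun t => 1 - S t := by
    ext t
    rw [cdf_eq_real, hS, ← Set.compl_Ioi, probReal_compl_eq_one_sub measurableSet_Ioi,
      measureReal_def, Measure.map_apply hX measurableSet_Ioi]
    rfl
  have hcont : Continuous (cdf (P.map X)) := hcdf ▸ continuous_const.sub hScont
  refine ⟨fun c => ?_⟩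
  rw [← measure_cdf (P.map X), StieltjesFunction.measure_singleton,
    hcont.continuousWithinAt.leftLim_eq, sub_self, ENNReal.ofReal_zero]

lemma ProbabilityTheory.IndepFun.measure_eq_eq_zero [IsFiniteMeasure P] {X Y : Ω → ℝ}
    (hX : Measurable X) (hY : Measurable Y) (hXY : IndepFun X Y P) [NullSingletonClass (P.map Y)] :
    P {ω | X ω = Y ω} = 0 := by
  have hdiag : MeasurableSet {p : ℝ × ℝ | p.1 = p.2} := measurableSet_diagonal
  rw [show {ω | X ω = Y ω} = (fun ω => (X ω, Y ω)) ⁻¹' {p | p.1 = p.2} from rfl,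
    ← Measure.map_apply (hX.prodMk hY) hdiag,
    (indepFun_iff_map_prod_eq_prod_map_map hX.aemeasurable hY.aemeasurable).mp hXY,
    Measure.prod_apply hdiag]
  simp [Set.preimage]

end Survival

end

open MeasureTheory Filter Finset ProbabilityTheory Set
open scoped ENNReal

theorem bootstrap_km_dominated_by_km_general
    {Ω : Type*} [MeasurableSpace Ω] (P : Measure Ω) [IsProbabilityMeasure P]
    (n : ℕ)
    (T C : Fin n → Ω → ℝ)
    (hTmeas : ∀ i, Measurable (T i)) (hCmeas : ∀ i, Measurable (C i))
    (hIndep : iIndepFun (Sum.elim T C) P)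
    (S : ℝ → ℝ)
    (hS : ∀ i t, S t = (P {ω | t < T i ω}).toReal)
    (hScont : Continuous S)
    (β : ℝ) (hβ : β ∈ Ioo (0 : ℝ) 1) :
    ∀ᵐ ω ∂P,
      1 - β ≤
        (Set.ncard {j : Fin n → Fin n |
            ∀ t : ℝ, 0 ≤ t →
              t ≤ sSup (Set.range fun i : Fin n => min (T (j i) ω) (C (j i) ω)) →
              kmProd (fun i : Fin n => min (T (j i) ω) (C (j i) ω))
                  (fun i : Fin n => if min (T (j i) ω) (C (j i) ω) = T (j i) ω
                    then (1 : ℝ) else 0) t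
                ≤ β⁻¹ * kmProd (fun i : Fin n => min (T i ω) (C i ω))
                    (fun i : Fin n => if min (T i ω) (C i ω) = T i ω then (1 : ℝ) else 0) t}
          : ℝ) / (n : ℝ) ^ n := by
  have hatoms := fun i => nullSingletonClass_map_of_continuous_survival (hTmeas i) (hS i) hScont
  have hTT : ∀ a b, a ≠ b → ∀ᵐ ω ∂P, T a ω ≠ T b ω := fun a b hab => by
    have h : IndepFun (T a) (T b) P := by
      simpa using hIndep.indepFun (i := .inl a) (j := .inl b) (by simpa)
    simpa [ae_iff] using h.measure_eq_eq_zero (hTmeas a) (hTmeas b)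
  have hTC : ∀ a b, ∀ᵐ ω ∂P, T a ω ≠ C b ω := fun a b => by
    have h : IndepFun (C b) (T a) P := by
      simpa using hIndep.indepFun (i := .inr b) (j := .inl a) (by simp)
    simpa [ae_iff, eq_comm] using h.measure_eq_eq_zero (hCmeas b) (hTmeas a)
  have hdistinct : ∀ᵐ ω ∂P, ∀ a b, a ≠ b → T a ω ≠ T b ω ∧ T a ω ≠ C b ω := by
    simp only [ae_all_iff]
    exact fun a b hab => (hTT a b hab).and (hTC a b)
  filter_upwards [hdistinct] with ω hω
  refine one_sub_le_ncard_kmProd_resample_le_div (x := fun i => min (T i ω) (C i ω))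
    (d := fun i => if min (T i ω) (C i ω) = T i ω then 1 else 0) (fun a => by split_ifs <;> simp)
    (fun a b ha hab => ?_) hβ.1
  by_contra hne
  have hTa : min (T a ω) (C a ω) = T a ω := by by_contra h; simp [h] at ha
  rcases min_choice (T b ω) (C b ω) with h | h
  · exact (hω a b hne).1 (by rw [← hTa, hab, h])
  · exact (hω a b hne).2 (by rw [← hTa, hab, h])

/-- Gill's Lemma 2.6(b), bootstrap version: for every `β ∈ (0,1)`, almost
surely, `P(S*ₙ(t) ≤ β⁻¹ Ŝₙ(t) for all t ∈ [0, T*ₙ] | 𝐗) ≥ 1 − β`.  The bootstrap sample is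
`(x ∘ j, d ∘ j)` for a uniformly random resampling map `j : Fin n → Fin n` and
`T*ₙ = maxᵢ x (j i)`, so the conditional probability given the data is the proportion of the
`nⁿ` resampling maps realizing the event. -/
theorem bootstrap_km_dominated_by_km
    {Ω : Type*} [MeasurableSpace Ω] (P : Measure Ω) [IsProbabilityMeasure P]
    (n : ℕ) (hn : 0 < n)
    (T C : Fin n → Ω → ℝ)
    (hTmeas : ∀ i, Measurable (T i)) (hCmeas : ∀ i, Measurable (C i))
    (hTpos : ∀ i, ∀ᵐ ω ∂P, 0 < T i ω) (hCpos : ∀ i, ∀ᵐ ω ∂P, 0 < C i ω)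
    (hIndep : iIndepFun (Sum.elim T C) P)
    (hTid : ∀ i j, P.map (T i) = P.map (T j))
    (hCid : ∀ i j, P.map (C i) = P.map (C j))
    (S : ℝ → ℝ)
    (hS : ∀ i t, S t = (P {ω | t < T i ω}).toReal)
    (hScont : Continuous S)
    (β : ℝ) (hβ : β ∈ Ioo (0 : ℝ) 1) :
    ∀ᵐ ω ∂P,
      1 - β ≤
        (Set.ncard {j : Fin n → Fin n |
            ∀ t : ℝ, 0 ≤ t →
              t ≤ sSup (Set.range fun i : Fin n => min (T (j i) ω) (C (j i) ω)) →
              kmProd (fun i : Fin n => min (T (j i) ω) (C (j i) ω))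
                  (fun i : Fin n => if min (T (j i) ω) (C (j i) ω) = T (j i) ω
                    then (1 : ℝ) else 0) t
                ≤ β⁻¹ * kmProd (fun i : Fin n => min (T i ω) (C i ω))
                    (fun i : Fin n => if min (T i ω) (C i ω) = T i ω then (1 : ℝ) else 0) t}
          : ℝ) / (n : ℝ) ^ n :=
  bootstrap_km_dominated_by_km_general P n T C hTmeas hCmeas hIndep S hS hScont β hβ
end

section
/- For every β ∈ (0,1), almost surely: P( n⁻¹ #{ i : X*ᵢ ≥ t } ≥ β · n⁻¹ #{ i : Xᵢ ≥ t } for all t ≤ T*ₙ | 𝐗 ) ≥ 1 − (e/β)·exp(−1/β). -/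
/-!
Sort the data decreasingly and replace each resampled index by the rank of the observation it
picks. A resampling map becomes a uniform `g : Fin n → Fin n`, and at any `t` with data count
`n Ĥₙ(t−) = r` the bootstrap count `n H*ₙ(t−)` is `N_r = #{l | g l < r}`.
Given `N_{r+1}`, `N_r` is binomial with success probability `r / (r + 1)`, so
`W_r = (1 - θ / r) ^ N_r` is a reverse martingale in `r`. For `θ = 1/β - 1`, Bernoulli's
inequality gives `W_r ≥ β` whenever `1 ≤ N_r < β r`; stopping at the largest such `r` bounds the
probability of a deficiency by `E W_n / β = (1 - θ/n)^n / β ≤ e^{-θ} / β = (e/β) e^{-1/β}`.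
-/

open MeasureTheory Filter Finset Set

noncomputable section

namespace EmpiricalSurvival

theorem sum_prod_eq_of_sum_fiber_eq {ι α β R : Type*} [Fintype ι] [DecidableEq ι] [Fintype α]
    [DecidableEq β] [CommSemiring R] (f : α → β) {w w' : α → R}
    (hw : ∀ b, ∑ v with f v = b, w v = ∑ v with f v = b, w' v) (S : Finset (ι → α))
    (hS : ∀ g g', (∀ l, f (g l) = f (g' l)) → g ∈ S → g' ∈ S) :
    ∑ g ∈ S, ∏ l, w (g l) = ∑ g ∈ S, ∏ l, w' (g l) := by
  have hfiber : ∀ c ∈ S.image (f ∘ ·), ∀ u : α → R,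
      ∑ g ∈ S with f ∘ g = c, ∏ l, u (g l) = ∏ l, ∑ v with f v = c l, u v := by
    intro c hc u
    obtain ⟨g₀, hg₀, rfl⟩ := Finset.mem_image.mp hc
    rw [prod_univ_sum]
    refine sum_congr (Finset.ext fun g => ?_) fun _ _ => rfl
    simp only [Finset.mem_filter, Fintype.mem_piFinset, Finset.mem_univ, true_and, funext_iff,
      Function.comp_apply]
    exact ⟨And.right, fun h => ⟨hS g₀ g (fun l => (h l).symm) hg₀, h⟩⟩
  have hmaps : ∀ g ∈ S, f ∘ g ∈ S.image (f ∘ ·) := fun g hg => mem_image_of_mem _ hg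
  rw [← sum_fiberwise_of_maps_to hmaps, ← sum_fiberwise_of_maps_to hmaps]
  refine sum_congr rfl fun c hc => ?_
  rw [hfiber c hc w, hfiber c hc w']
  exact prod_congr rfl fun l _ => hw (c l)

/-- Paths stopped at level `r + 1` (bad there, good above) contribute `W (r + 1) - β ≥ 0`, so
the sum of `W r - β` over the paths not yet stopped can only grow with `r`. -/
theorem sum_sub_le_sum_sub_of_reverse_martingale {α : Type*} [Fintype α] (W : ℕ → α → ℝ)
    (bad : ℕ → α → Prop) [∀ r, DecidablePred (bad r)] {β : ℝ} {m n : ℕ} (hmn : m ≤ n)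
    (hstep : ∀ r, m ≤ r → r < n →
      ∑ g with ∀ s ∈ Finset.Ioc r n, ¬ bad s g, W r g
        = ∑ g with ∀ s ∈ Finset.Ioc r n, ¬ bad s g, W (r + 1) g)
    (hbad : ∀ r ∈ Finset.Ioc m n, ∀ g, bad r g → β ≤ W r g) :
    ∑ g with ∀ r ∈ Finset.Ioc m n, ¬ bad r g, (W m g - β) ≤ ∑ g, (W n g - β) := by
  induction hmn using Nat.decreasingInduction with
  | self => simp
  | of_succ m hmn ih =>
    have hIoc : ∀ g, (∀ r ∈ Finset.Ioc m n, ¬ bad r g) ↔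
        ¬ bad (m + 1) g ∧ ∀ r ∈ Finset.Ioc (m + 1) n, ¬ bad r g := fun g => by
      rw [← Finset.Icc_add_one_left_eq_Ioc, ← Finset.Ioc_insert_left hmn, Finset.forall_mem_insert]
    have hmart : ∑ g with ∀ r ∈ Finset.Ioc m n, ¬ bad r g, (W m g - β)
        = ∑ g with ∀ r ∈ Finset.Ioc m n, ¬ bad r g, (W (m + 1) g - β) := by
      rw [sum_sub_distrib, sum_sub_distrib, hstep m le_rfl hmn]
    rw [hmart]
    refine le_trans (sum_le_sum_of_subset_of_nonneg (fun g hg => ?_) fun g hg hg' => ?_)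
      (ih (fun r hr => hstep r (by omega)) fun r hr =>
        hbad r (Finset.Ioc_subset_Ioc_left m.le_succ hr))
    · simp only [Finset.mem_filter, Finset.mem_univ, true_and, hIoc] at hg ⊢
      exact hg.2
    · simp only [Finset.mem_filter, Finset.mem_univ, true_and, hIoc, not_and', not_not] at hg hg'
      exact sub_nonneg.mpr (hbad _ (by simp only [Finset.mem_Ioc]; omega) g (hg' hg))

theorem mul_card_exists_le_sum_of_reverse_martingale {α : Type*} [Fintype α] (W : ℕ → α → ℝ)
    (bad : ℕ → α → Prop) [∀ r, DecidablePred (bad r)] {β : ℝ} {m n : ℕ} (hmn : m ≤ n)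
    (hstep : ∀ r, m ≤ r → r < n →
      ∑ g with ∀ s ∈ Finset.Ioc r n, ¬ bad s g, W r g
        = ∑ g with ∀ s ∈ Finset.Ioc r n, ¬ bad s g, W (r + 1) g)
    (hbad : ∀ r ∈ Finset.Ioc m n, ∀ g, bad r g → β ≤ W r g) (hW : ∀ g, 0 ≤ W m g) :
    β * #{g | ∃ r ∈ Finset.Ioc m n, bad r g} ≤ ∑ g, W n g := by
  have hmain := sum_sub_le_sum_sub_of_reverse_martingale W bad hmn hstep hbad
  have hlower : -(β * #{g | ∀ r ∈ Finset.Ioc m n, ¬ bad r g})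
      ≤ ∑ g with ∀ r ∈ Finset.Ioc m n, ¬ bad r g, (W m g - β) := by
    rw [← nsmul_eq_mul', ← sum_const, ← sum_neg_distrib]
    exact sum_le_sum fun g _ => by linarith [hW g]
  have hcard : #{g | ∃ r ∈ Finset.Ioc m n, bad r g} + #{g | ∀ r ∈ Finset.Ioc m n, ¬ bad r g}
      = Fintype.card α := by
    have := card_filter_add_card_filter_not (s := univ)
      (fun g : α => ∀ r ∈ Finset.Ioc m n, ¬ bad r g)
    simp only [not_forall, not_not, exists_prop, card_univ] at this
    omega
  have htotal : ∑ g, (W n g - β) = ∑ g, W n g - Fintype.card α * β := by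
    rw [sum_sub_distrib, sum_const, card_univ, nsmul_eq_mul]
  have hcardℝ : (#{g | ∃ r ∈ Finset.Ioc m n, bad r g} : ℝ)
      + #{g | ∀ r ∈ Finset.Ioc m n, ¬ bad r g} = Fintype.card α := by
    exact_mod_cast hcard
  calc β * #{g | ∃ r ∈ Finset.Ioc m n, bad r g}
      = Fintype.card α * β - β * #{g | ∀ r ∈ Finset.Ioc m n, ¬ bad r g} := by
        rw [← hcardℝ]; ring
    _ ≤ ∑ g, W n g := by linarith

theorem mem_iff_val_lt_card_of_isLowerSet {n : ℕ} {s : Finset (Fin n)}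
    (hs : IsLowerSet (s : Set (Fin n))) (p : Fin n) : p ∈ s ↔ (p : ℕ) < #s := by
  rcases hs.eq_univ_or_Iio with h | ⟨a, h⟩
  · rw [Finset.coe_eq_univ.mp h]
    simp
  · rw [← Finset.coe_Iio, Finset.coe_inj] at h
    subst h
    rw [Finset.mem_Iio, Fin.card_Iio, Fin.lt_def]

theorem exists_perm_le_iff_lt_card {α : Type*} [LinearOrder α] {n : ℕ}
    (x : Fin n → α) : ∃ σ : Equiv.Perm (Fin n), ∀ t i, t ≤ x i ↔ (σ i : ℕ) < #{k | t ≤ x k} := by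
  set τ := Tuple.sort (OrderDual.toDual ∘ x)
  have hanti : Antitone (x ∘ τ) := Tuple.monotone_sort (OrderDual.toDual ∘ x)
  refine ⟨τ.symm, fun t i => ?_⟩
  have hcard : #{k | t ≤ x k} = #{p | t ≤ x (τ p)} :=
    card_equiv τ.symm fun k => by simp
  have hlower : IsLowerSet (({p | t ≤ x (τ p)} : Finset (Fin n)) : Set (Fin n)) :=
    fun a b hba ha => by simpa using (by simpa using ha : t ≤ x (τ a)).trans (hanti hba)
  rw [hcard, ← mem_iff_val_lt_card_of_isLowerSet hlower]
  simp

section Deficiency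

variable {ι : Type*} [Fintype ι] {n : ℕ}

/-- With the data sorted decreasingly, `g l` is the rank of the observation drawn at `l`, and
`countBelow r g = n H*ₙ(t−)` for every `t` with `n Ĥₙ(t−) = r`. -/
def countBelow (r : ℕ) (g : ι → Fin n) : ℕ := #{l | (g l : ℕ) < r}

def Deficient (β : ℝ) (r : ℕ) (g : ι → Fin n) : Prop :=
  1 ≤ countBelow r g ∧ (countBelow r g : ℝ) < β * r

instance (β : ℝ) (r : ℕ) : DecidablePred (Deficient (ι := ι) (n := n) β r) :=
  fun _ => inferInstanceAs (Decidable (_ ∧ _))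

def levelWeight (θ : ℝ) (r v : ℕ) : ℝ := if v < r then 1 - θ / r else 1

def weight (θ : ℝ) (r : ℕ) (g : ι → Fin n) : ℝ := (1 - θ / r) ^ countBelow r g

theorem weight_eq_prod (θ : ℝ) (r : ℕ) (g : ι → Fin n) :
    weight θ r g = ∏ l, levelWeight θ r (g l) := by
  simp only [weight, countBelow, levelWeight]
  rw [prod_ite, prod_const, prod_const_one, mul_one]

/-- Only the fibre `{0, …, r}` over `r` is not a singleton above `r`, and on it
`r (1 - θ / r) + 1 = (r + 1) (1 - θ / (r + 1))`. -/
theorem sum_levelWeight_fiber_succ {θ : ℝ} {r : ℕ} (hr : 0 < r) (hrn : r < n) (b : ℕ) :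
    ∑ v : Fin n with max v.val r = b, levelWeight θ r v
      = ∑ v : Fin n with max v.val r = b, levelWeight θ (r + 1) v := by
  by_cases hb : b = r
  · subst hb
    have hfiber : ∀ w : ℕ → ℝ,
        ∑ v : Fin n with max v.val b = b, w v = ∑ i ∈ range (b + 1), w i := by
      intro w
      rw [sum_filter, Fin.sum_univ_eq_sum_range (fun i => if max i b = b then w i else 0),
        ← sum_filter]
      congr 1
      ext i
      simp only [Finset.mem_filter, Finset.mem_range]
      omega
    rw [hfiber, hfiber, sum_range_succ]
    simp only [levelWeight, lt_irrefl, if_false]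
    rw [sum_congr rfl fun i hi => if_pos (Finset.mem_range.mp hi),
      sum_congr rfl fun i hi => if_pos (Finset.mem_range.mp hi)]
    simp only [sum_const, card_range, nsmul_eq_mul]
    push_cast
    field_simp
    ring
  · refine sum_congr rfl fun v hv => ?_
    have hrv : r + 1 ≤ v := by have := (Finset.mem_filter.mp hv).2; omega
    simp only [levelWeight, if_neg (by omega : ¬ (v : ℕ) < r),
      if_neg (by omega : ¬ (v : ℕ) < r + 1)]

/-- `max v r` keeps what is known at level `r + 1`: whether `v ≤ r`, and `v` itself otherwise. -/
theorem sum_weight_succ (θ : ℝ) {r : ℕ} (hr : 0 < r) (hrn : r < n) (S : Finset (ι → Fin n))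
    (hS : ∀ g g', (∀ l, max (g l).val r = max (g' l).val r) → g ∈ S → g' ∈ S) :
    ∑ g ∈ S, weight θ r g = ∑ g ∈ S, weight θ (r + 1) g := by
  classical
  simp only [weight_eq_prod]
  exact sum_prod_eq_of_sum_fiber_eq (fun v : Fin n => max v.val r)
    (sum_levelWeight_fiber_succ hr hrn) S hS

theorem sum_weight_self [DecidableEq ι] (θ : ℝ) :
    ∑ g : ι → Fin n, weight θ n g = n ^ Fintype.card ι * (1 - θ / n) ^ Fintype.card ι := by
  have hcount : ∀ g : ι → Fin n, countBelow n g = Fintype.card ι := fun g => by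
    simp [countBelow]
  simp [weight, hcount, sum_const]

theorem countBelow_eq_of_max_eq {r r' : ℕ} (hr : r < r') {g g' : ι → Fin n}
    (h : ∀ l, max (g l).val r = max (g' l).val r) : countBelow r' g = countBelow r' g' := by
  unfold countBelow
  congr 1
  ext l
  have := h l
  simp only [Finset.mem_filter, Finset.mem_univ, true_and]
  omega

theorem one_div_lt_of_deficient {β : ℝ} (hβ : 0 < β) {r : ℕ} {g : ι → Fin n}
    (h : Deficient β r g) : 1 / β < r := by
  rw [div_lt_iff₀ hβ]
  have : (1 : ℝ) ≤ countBelow r g := by exact_mod_cast h.1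
  linarith [h.2]

theorem le_weight_of_deficient {β : ℝ} (hβ0 : 0 < β) (hβ1 : β < 1) {r : ℕ} {g : ι → Fin n}
    (h : Deficient β r g) : β ≤ weight (1 / β - 1) r g := by
  set N := countBelow r g
  have hr : 1 < β * r := by linarith [(div_lt_iff₀ hβ0).mp (one_div_lt_of_deficient hβ0 h)]
  set t := 1 / (β * r)
  have ht0 : 0 ≤ t := by positivity
  have ht1 : t ≤ 1 := (div_le_one (by linarith)).mpr hr.le
  have htN : t * N ≤ 1 := by
    rw [one_div_mul_eq_div, div_le_one (by linarith)]
    exact h.2.le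
  have hbern : β ^ t ≤ 1 - (1 / β - 1) / r := by
    have := rpow_one_add_le_one_add_mul_self (s := β - 1) (by linarith) ht0 ht1
    convert this using 1
    · ring_nf
    · have : (r : ℝ) ≠ 0 := by rintro h0; simp [h0] at hr; linarith
      simp only [t]
      field_simp
      ring
  calc β = β ^ (1 : ℝ) := (Real.rpow_one β).symm
    _ ≤ β ^ (t * N) := Real.rpow_le_rpow_of_exponent_ge hβ0 hβ1.le htN
    _ = (β ^ t) ^ N := Real.rpow_mul_natCast hβ0.le t N
    _ ≤ weight (1 / β - 1) r g := pow_le_pow_left₀ (by positivity) hbern N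

theorem mul_card_deficient_le [DecidableEq ι] {β : ℝ} (hβ0 : 0 < β) (hβ1 : β < 1)
    (hn : 1 / β < n + 1) :
    β * #{g : ι → Fin n | ∃ r ≤ n, Deficient β r g}
      ≤ n ^ Fintype.card ι * (1 - (1 / β - 1) / n) ^ Fintype.card ι := by
  set m := ⌊1 / β⌋₊
  have hm1 : 1 ≤ m := Nat.le_floor (by rw [Nat.cast_one, le_div_iff₀ hβ0]; linarith)
  have hθm : 1 / β - 1 ≤ m := by linarith [Nat.lt_floor_add_one (1 / β)]
  have hmn : m ≤ n := Nat.lt_succ_iff.mp ((Nat.floor_lt (by positivity)).mpr (by exact_mod_cast hn))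
  have hlt : ∀ r (g : ι → Fin n), Deficient β r g → m < r := fun r g h =>
    (Nat.floor_lt (by positivity)).mpr (one_div_lt_of_deficient hβ0 h)
  have hset : #{g : ι → Fin n | ∃ r ≤ n, Deficient β r g}
      = #{g : ι → Fin n | ∃ r ∈ Finset.Ioc m n, Deficient β r g} := by
    congr 1
    refine filter_congr fun g _ => exists_congr fun r => ?_
    simp only [Finset.mem_Ioc]
    exact ⟨fun ⟨hr, h⟩ => ⟨⟨hlt r g h, hr⟩, h⟩, fun ⟨hr, h⟩ => ⟨hr.2, h⟩⟩
  rw [hset, ← sum_weight_self]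
  refine mul_card_exists_le_sum_of_reverse_martingale (weight (1 / β - 1)) (Deficient β) hmn
    (fun r hmr hrn => sum_weight_succ _ (by omega) hrn _ fun g g' h hg => ?_)
    (fun r _ g h => le_weight_of_deficient hβ0 hβ1 h) fun g => ?_
  · simp only [Finset.mem_filter, Finset.mem_univ, true_and] at hg ⊢
    intro s hs
    simpa only [Deficient, countBelow_eq_of_max_eq (Finset.mem_Ioc.mp hs).1 h] using hg s hs
  · have hm0 : (0 : ℝ) < m := by exact_mod_cast hm1
    exact pow_nonneg (sub_nonneg.mpr ((div_le_one hm0).mpr hθm)) _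

theorem card_deficient_le {β : ℝ} (hβ0 : 0 < β) (hβ1 : β < 1) :
    (#{g : Fin n → Fin n | ∃ r ≤ n, Deficient β r g} : ℝ)
      ≤ Real.exp 1 / β * Real.exp (-1 / β) * n ^ n := by
  rcases lt_or_ge (1 / β) (n + 1) with hn | hn
  · have hcount := mul_card_deficient_le (ι := Fin n) hβ0 hβ1 hn
    rw [Fintype.card_fin] at hcount
    have hexp := Real.one_sub_div_pow_le_exp_neg (n := n) (t := 1 / β - 1) (by linarith)
    have hconst : Real.exp 1 / β * Real.exp (-1 / β) = Real.exp (-(1 / β - 1)) / β := by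
      rw [div_mul_eq_mul_div, ← Real.exp_add]
      ring_nf
    rw [hconst, div_mul_eq_mul_div, le_div_iff₀ hβ0, mul_comm _ β]
    calc β * #{g : Fin n → Fin n | ∃ r ≤ n, Deficient β r g}
        ≤ n ^ n * (1 - (1 / β - 1) / n) ^ n := hcount
      _ ≤ n ^ n * Real.exp (-(1 / β - 1)) := by gcongr
      _ = Real.exp (-(1 / β - 1)) * n ^ n := mul_comm _ _
  · have hempty : #{g : Fin n → Fin n | ∃ r ≤ n, Deficient β r g} = 0 := by
      refine card_eq_zero.mpr (filter_eq_empty_iff.mpr fun g _ ⟨r, hr, h⟩ => ?_)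
      have := one_div_lt_of_deficient hβ0 h
      have : (r : ℝ) ≤ n := by exact_mod_cast hr
      linarith
    rw [hempty, Nat.cast_zero]
    positivity

theorem exists_deficient_comp_of_lt {x : Fin n → ℝ} {σ : Equiv.Perm (Fin n)}
    (hσ : ∀ t i, t ≤ x i ↔ (σ i : ℕ) < #{k | t ≤ x k}) {β t : ℝ} {j : ι → Fin n}
    (ht : ∃ l, t ≤ x (j l)) (hlt : (#{l | t ≤ x (j l)} : ℝ) < β * #{k | t ≤ x k}) :
    ∃ r ≤ n, Deficient β r (σ ∘ j) := by
  have hcount : countBelow #{k | t ≤ x k} (σ ∘ j) = #{l | t ≤ x (j l)} := by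
    simp only [countBelow, Function.comp_apply, ← hσ]
  refine ⟨#{k | t ≤ x k}, card_le_univ _ |>.trans_eq (Fintype.card_fin n), ?_⟩
  rw [Deficient, hcount]
  obtain ⟨l, hl⟩ := ht
  exact ⟨card_pos.mpr ⟨l, by simpa using hl⟩, hlt⟩

end Deficiency

end EmpiricalSurvival

open EmpiricalSurvival in
theorem bootstrap_empirical_survival_lower_bound_general
    {Ω : Type*} [MeasurableSpace Ω] (P : Measure Ω)
    (n : ℕ) (hn : 0 < n)
    (X : Fin n → Ω → ℝ)
    (β : ℝ) (hβ : β ∈ Ioo (0 : ℝ) 1) :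
    ∀ᵐ ω ∂P,
      1 - (Real.exp 1 / β) * Real.exp (-1 / β) ≤
        (Set.ncard {j : Fin n → Fin n |
            ∀ t : ℝ, t ≤ sSup (Set.range fun i : Fin n => X (j i) ω) →
              β * (((Finset.univ.filter (fun k : Fin n => t ≤ X k ω)).card : ℝ) / (n : ℝ))
                ≤ ((Finset.univ.filter (fun k : Fin n => t ≤ X (j k) ω)).card : ℝ) / (n : ℝ)}
          : ℝ) / (n : ℝ) ^ n := by
  obtain ⟨hβ0, hβ1⟩ := hβ
  refine Eventually.of_forall fun ω => ?_
  obtain ⟨σ, hσ⟩ := exists_perm_le_iff_lt_card fun i => X i ω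
  set good : Set (Fin n → Fin n) := {j | ∀ t : ℝ, t ≤ sSup (Set.range fun i : Fin n => X (j i) ω) →
    β * ((#{k | t ≤ X k ω} : ℝ) / n) ≤ (#{k | t ≤ X (j k) ω} : ℝ) / n}
  have hdeficient : ∀ j ∉ good, ∃ r ≤ n, Deficient β r (σ ∘ j) := by
    intro j hj
    simp only [good, Set.mem_ofPred_eq, not_forall, not_le, exists_prop] at hj
    obtain ⟨t, ht, hlt⟩ := hj
    have : Nonempty (Fin n) := ⟨⟨0, hn⟩⟩
    obtain ⟨i, hi⟩ := (Set.range_nonempty _).csSup_mem (Set.finite_range fun i => X (j i) ω)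
    refine exists_deficient_comp_of_lt hσ ⟨i, ht.trans_eq hi.symm⟩ ?_
    rwa [mul_div_assoc', div_lt_div_iff_of_pos_right (by positivity)] at hlt
  have hcompl : goodᶜ.ncard ≤ #{g : Fin n → Fin n | ∃ r ≤ n, Deficient β r g} := by
    rw [← Set.ncard_coe_finset, coe_filter]
    exact Set.ncard_le_ncard_of_injOn (σ ∘ ·) (fun j hj => by simpa using hdeficient j hj)
      σ.injective.comp_left.injOn
  have htotal : (good.ncard : ℝ) + goodᶜ.ncard = n ^ n := by
    exact_mod_cast (Set.ncard_add_ncard_compl good).trans (by simp)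
  rw [le_div_iff₀ (by positivity)]
  linarith [card_deficient_le (n := n) hβ0 hβ1, (Nat.cast_le (α := ℝ)).mpr hcompl]

/-- Gill's Lemma 2.7(b), bootstrap version: for every `β ∈ (0,1)`, almost
surely, `P( n⁻¹#{i : X*ᵢ ≥ t} ≥ β n⁻¹#{i : Xᵢ ≥ t} for all t ≤ T*ₙ | 𝐗 )
≥ 1 − (e/β) exp(−1/β)`.  The bootstrap sample is `X*ᵢ = X (j i)` for a uniformly random
resampling map `j : Fin n → Fin n` and `T*ₙ = maxᵢ X*ᵢ`, so the conditional probability given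
the data is the proportion of the `nⁿ` resampling maps realizing the event. -/
theorem bootstrap_empirical_survival_lower_bound
    {Ω : Type*} [MeasurableSpace Ω] (P : Measure Ω) [IsProbabilityMeasure P]
    (n : ℕ) (hn : 0 < n)
    (X : Fin n → Ω → ℝ)
    (β : ℝ) (hβ : β ∈ Ioo (0 : ℝ) 1) :
    ∀ᵐ ω ∂P,
      1 - (Real.exp 1 / β) * Real.exp (-1 / β) ≤
        (Set.ncard {j : Fin n → Fin n |
            ∀ t : ℝ, t ≤ sSup (Set.range fun i : Fin n => X (j i) ω) →
              β * (((Finset.univ.filter (fun k : Fin n => t ≤ X k ω)).card : ℝ) / (n : ℝ))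
                ≤ ((Finset.univ.filter (fun k : Fin n => t ≤ X (j k) ω)).card : ℝ) / (n : ℝ)}
          : ℝ) / (n : ℝ) ^ n :=
  bootstrap_empirical_survival_lower_bound_general P n hn X β hβ

end
end

section
/- Let τ > 0 and let h, Z : [0,τ] → ℝ be right-continuous step functions, each with finitely many discontinuities and constant between discontinuities, such that h is non-negative and non-increasing with h(0) = 1, and Z(0) = 0. Define U(s) = Σ_{u ∈ (0,s]} h(u)·(Z(u) − Z(u−)) (the sum over the jump points of Z in (0,s]). Then for all t ≤ τ: sup_{s∈[0,t]} h(s)|Z(s)| ≤ 2 · sup_{s∈(0,t]} |U(s)|. -/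
/-! With `U r = ∫_(0,r] h dZ` and `M = sup |U|`, the invariant `|h r Z r - U r| ≤ (1 - h r) M`
holds at `r = 0` and survives both ways the state changes: at a jump `p` of `Z` the integral `U`
jumps by `h p ΔZ`, so `h p Z - U` is unchanged; when `h` decreases from `η` to `η'`,
`η' Z - U = (η' / η) (η Z - U) - (1 - η' / η) U`. At `r = s` it gives
`h s |Z s| ≤ (1 - h s) M + |U s| ≤ 2 M`. -/

open Finset Set Function

noncomputable section

lemma abs_mul_sub_le_of_le {M η η' z u : ℝ} (hu : |u| ≤ M) (hη' : 0 ≤ η') (hle : η' ≤ η)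
    (H : |η * z - u| ≤ (1 - η) * M) : |η' * z - u| ≤ (1 - η') * M := by
  rcases hle.eq_or_lt with rfl | hlt
  · exact H
  have hη : 0 < η := hη'.trans_lt hlt
  set c := η' / η
  have hc0 : 0 ≤ c := div_nonneg hη' hη.le
  have hc1 : c ≤ 1 := (div_le_one hη).mpr hlt.le
  calc |η' * z - u| = |c * (η * z - u) + (c - 1) * u| := by
        congr 1; simp only [c]; field_simp; ring
    _ ≤ c * |η * z - u| + (1 - c) * |u| := by
        refine (abs_add_le _ _).trans_eq ?_
        rw [abs_mul, abs_mul, abs_of_nonneg hc0, abs_of_nonpos (by linarith : c - 1 ≤ 0), neg_sub]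
    _ ≤ c * ((1 - η) * M) + (1 - c) * M := by gcongr
    _ = (1 - η') * M := by simp only [c]; field_simp; ring

def jumpIntegral (h Z : ℝ → ℝ) (D : Finset ℝ) (r : ℝ) : ℝ :=
  ∑ u ∈ D.filter (fun u => u ≤ r), h u * (Z u - leftLim Z u)

section StepFunction

variable {τ : ℝ} {h Z : ℝ → ℝ} {D : Finset ℝ}

lemma jumpIntegral_zero (hD : ∀ u ∈ D, 0 < u) : jumpIntegral h Z D 0 = 0 := by
  refine Finset.sum_eq_zero fun u hu => ?_
  rw [Finset.mem_filter] at hu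
  exact absurd hu.2 (hD u hu.1).not_ge

lemma finite_range_jumpIntegral : (range (jumpIntegral h Z D)).Finite := by
  refine ((D.powerset : Set (Finset ℝ)).toFinite.image
    fun T => ∑ u ∈ T, h u * (Z u - leftLim Z u)).subset ?_
  rintro _ ⟨r, rfl⟩
  exact ⟨_, Finset.mem_coe.mpr (Finset.mem_powerset.mpr (Finset.filter_subset _ _)), rfl⟩

lemma bddAbove_abs_jumpIntegral_image (S : Set ℝ) :
    BddAbove ((fun r => |jumpIntegral h Z D r|) '' S) := by
  refine ((finite_range_jumpIntegral (h := h) (Z := Z) (D := D)).image abs).bddAbove.mono ?_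
  rintro _ ⟨r, -, rfl⟩
  exact ⟨_, ⟨r, rfl⟩, rfl⟩

variable (hZ : ∀ a b : ℝ, 0 ≤ a → a ≤ b → b ≤ τ → (∀ u ∈ D, u ∉ Ioc a b) → Z a = Z b)
include hZ

lemma leftLim_eq_of_forall_notMem_Ioo {a b : ℝ} (ha : 0 ≤ a) (hab : a < b) (hb : b ≤ τ)
    (hD : ∀ u ∈ D, u ∉ Ioo a b) : leftLim Z b = Z a := by
  refine leftLim_eq_of_tendsto (h := nhdsLT_neBot b) (tendsto_const_nhds.congr' ?_)
  filter_upwards [Ioo_mem_nhdsLT hab] with x hx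
  exact hZ a x ha hx.1.le (hx.2.le.trans hb) fun u hu hux => hD u hu ⟨hux.1, hux.2.trans_lt hx.2⟩

lemma jumpIntegral_eq_add_of_forall_notMem_Ioo {a b : ℝ} (ha : 0 ≤ a) (hab : a < b)
    (hb : b ≤ τ) (hD : ∀ u ∈ D, u ∉ Ioo a b) :
    jumpIntegral h Z D b = jumpIntegral h Z D a + h b * (Z b - Z a) := by
  by_cases hbD : b ∈ D
  · have hsplit : D.filter (fun u => u ≤ b) = insert b (D.filter (fun u => u ≤ a)) := by
      ext u
      grind
    have hbnot : b ∉ D.filter (fun u => u ≤ a) := by simp [hab]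
    rw [jumpIntegral, hsplit, Finset.sum_insert hbnot,
      leftLim_eq_of_forall_notMem_Ioo hZ ha hab hb hD, add_comm, jumpIntegral]
  · have hsame : D.filter (fun u => u ≤ b) = D.filter (fun u => u ≤ a) :=
      Finset.filter_congr fun u hu => by grind
    have hZab : Z a = Z b := hZ a b ha hab.le hb fun u hu hmem => by grind
    rw [jumpIntegral, hsame, ← hZab, sub_self, mul_zero, add_zero, jumpIntegral]

lemma abs_mul_sub_jumpIntegral_le_of_forall_notMem_Ioo {M a b : ℝ} (ha : 0 ≤ a) (hab : a < b)
    (hb : b ≤ τ) (hD : ∀ u ∈ D, u ∉ Ioo a b) (hUa : |jumpIntegral h Z D a| ≤ M)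
    (hhb : 0 ≤ h b) (hhab : h b ≤ h a)
    (H : |h a * Z a - jumpIntegral h Z D a| ≤ (1 - h a) * M) :
    |h b * Z b - jumpIntegral h Z D b| ≤ (1 - h b) * M := by
  rw [jumpIntegral_eq_add_of_forall_notMem_Ioo hZ ha hab hb hD,
    show ∀ U, h b * Z b - (U + h b * (Z b - Z a)) = h b * Z a - U from fun U => by ring]
  exact abs_mul_sub_le_of_le hUa hhb hhab H

lemma abs_mul_sub_jumpIntegral_le {M s : ℝ} (hD : ∀ u ∈ D, 0 < u) (hZ0 : Z 0 = 0)
    (hs : s ≤ τ) (hh : AntitoneOn h (Icc 0 s)) (hh0 : h 0 ≤ 1) (hhs : 0 ≤ h s)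
    (hM : ∀ r ∈ Icc 0 s, |jumpIntegral h Z D r| ≤ M) :
    ∀ r ∈ Icc 0 s, |h r * Z r - jumpIntegral h Z D r| ≤ (1 - h r) * M := by
  -- adjoining `0` gives every `r > 0` a predecessor `a` with no point of `D` in `(a, r)`
  set T := insert 0 D
  intro r
  induction r using (measure fun r => #(T.filter (· < r))).wf.induction with | _ r ih => ?_
  rintro ⟨hr0, hrs⟩
  rcases hr0.eq_or_lt with rfl | hr0
  · rw [hZ0, jumpIntegral_zero hD, mul_zero, sub_zero, abs_zero]
    exact mul_nonneg (sub_nonneg.mpr hh0) ((abs_nonneg _).trans (hM 0 ⟨le_rfl, hrs⟩))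
  have hne : (T.filter (· < r)).Nonempty := ⟨0, by simp [T, hr0]⟩
  set a := (T.filter (· < r)).max' hne
  obtain ⟨haT, har⟩ := Finset.mem_filter.mp (max'_mem _ hne)
  have ha0 : 0 ≤ a := by grind
  have hDa : ∀ u ∈ D, u ∉ Ioo a r := fun u hu hmem => hmem.1.not_ge <|
    le_max' _ u (Finset.mem_filter.mpr ⟨Finset.mem_insert_of_mem hu, hmem.2⟩)
  have hcard : #(T.filter (· < a)) < #(T.filter (· < r)) :=
    Finset.card_lt_card ((Finset.ssubset_iff_of_subset fun u => by grind).mpr ⟨a, by grind, by simp⟩)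
  have has : a ∈ Icc 0 s := ⟨ha0, har.le.trans hrs⟩
  exact abs_mul_sub_jumpIntegral_le_of_forall_notMem_Ioo hZ ha0 har (hrs.trans hs) hDa (hM a has)
    (hhs.trans (hh ⟨hr0.le, hrs⟩ ⟨hr0.le.trans hrs, le_rfl⟩ hrs)) (hh has ⟨hr0.le, hrs⟩ har.le)
    (ih a hcard has)

end StepFunction

theorem weighted_jump_process_sup_bound_general
    (τ : ℝ)
    (h Z : ℝ → ℝ)
    (DZ : Finset ℝ) (hDZ : ↑DZ ⊆ Ioc (0 : ℝ) τ)
    (Zstep : ∀ a b : ℝ, 0 ≤ a → a ≤ b → b ≤ τ → (∀ u ∈ DZ, u ∉ Ioc a b) → Z a = Z b)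
    (hanti : AntitoneOn h (Icc 0 τ))
    (h0 : h 0 = 1) (Z0 : Z 0 = 0) :
    ∀ t ≤ τ, ∀ s ∈ Icc (0 : ℝ) t,
      h s * |Z s| ≤
        2 * sSup ((fun s' => |∑ u ∈ DZ.filter (fun u => u ≤ s'),
            h u * (Z u - leftLim Z u)|) '' Ioc 0 t) := by
  rintro t ht s ⟨hs0, hst⟩
  change h s * |Z s| ≤ 2 * sSup ((fun r => |jumpIntegral h Z DZ r|) '' Ioc 0 t)
  set M := sSup ((fun r => |jumpIntegral h Z DZ r|) '' Ioc 0 t)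
  have hDZ0 : ∀ u ∈ DZ, 0 < u := fun u hu => (hDZ hu).1
  have hM0 : 0 ≤ M := Real.sSup_nonneg (by rintro _ ⟨r, -, rfl⟩; exact abs_nonneg _)
  rcases lt_or_ge (h s) 0 with hhs | hhs
  · nlinarith [abs_nonneg (Z s)]
  have hM : ∀ r ∈ Icc 0 s, |jumpIntegral h Z DZ r| ≤ M := by
    rintro r ⟨hr0, hrs⟩
    rcases hr0.eq_or_lt with rfl | hr0
    · rwa [jumpIntegral_zero hDZ0, abs_zero]
    · exact le_csSup (bddAbove_abs_jumpIntegral_image _) ⟨r, ⟨hr0, hrs.trans hst⟩, rfl⟩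
  have hsτ := hst.trans ht
  have key := abs_mul_sub_jumpIntegral_le Zstep hDZ0 Z0 hsτ
    (hanti.mono (Icc_subset_Icc_right hsτ)) h0.le hhs hM s ⟨hs0, le_rfl⟩
  calc h s * |Z s| = |h s * Z s - jumpIntegral h Z DZ s + jumpIntegral h Z DZ s| := by
        rw [sub_add_cancel, abs_mul, abs_of_nonneg hhs]
    _ ≤ (1 - h s) * M + M := (abs_add_le _ _).trans (add_le_add key (hM s ⟨hs0, le_rfl⟩))
    _ ≤ 2 * M := by nlinarith

/-- adaptation of Gill's Lemma 2.9 to jump processes: let `h, Z` be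
right-continuous step functions on `[0,τ]` (constant between their finitely many
discontinuities, listed in the finite sets `Dh`, `DZ ⊆ (0,τ]`) such that `h` is non-negative
and non-increasing with `h 0 = 1` and `Z 0 = 0`.  With
`U(s) = Σ_{u ∈ DZ, u ≤ s} h(u)(Z(u) − Z(u−))` (the integral `∫₀^s h dZ`), one has, for all
`t ≤ τ`, `sup_{s∈[0,t]} h(s)|Z(s)| ≤ 2 sup_{s∈(0,t]} |U(s)|`. -/
theorem weighted_jump_process_sup_bound
    (τ : ℝ) (hτ : 0 < τ)
    (h Z : ℝ → ℝ)
    (Dh DZ : Finset ℝ) (hDh : ↑Dh ⊆ Ioc (0 : ℝ) τ) (hDZ : ↑DZ ⊆ Ioc (0 : ℝ) τ)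
    -- h and Z are constant on any subinterval of [0,τ] containing none of their jump points
    (hstep : ∀ a b : ℝ, 0 ≤ a → a ≤ b → b ≤ τ → (∀ u ∈ Dh, u ∉ Ioc a b) → h a = h b)
    (Zstep : ∀ a b : ℝ, 0 ≤ a → a ≤ b → b ≤ τ → (∀ u ∈ DZ, u ∉ Ioc a b) → Z a = Z b)
    (hnonneg : ∀ s ∈ Icc (0 : ℝ) τ, 0 ≤ h s)
    (hanti : AntitoneOn h (Icc 0 τ))
    (h0 : h 0 = 1) (Z0 : Z 0 = 0) :
    ∀ t ≤ τ, ∀ s ∈ Icc (0 : ℝ) t,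
      h s * |Z s| ≤
        2 * sSup ((fun s' => |∑ u ∈ DZ.filter (fun u => u ≤ s'),
            h u * (Z u - leftLim Z u)|) '' Ioc 0 t) :=
  weighted_jump_process_sup_bound_general τ h Z DZ hDZ Zstep hanti h0 Z0

end
end

section
/- Let k ∈ ℕ, let 1 ≥ h₁ ≥ h₂ ≥ … ≥ h_k ≥ 0 be reals and z₁,…,z_k ∈ ℝ. Define Z_j = Σ_{i=1}^j zᵢ and U_j = Σ_{i=1}^j hᵢ zᵢ for 1 ≤ j ≤ k. Then for every j ∈ {1,…,k}: h_j · |Z_j| ≤ 2 · max_{1 ≤ m ≤ j} |U_m|. -/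
open Finset Order

/-! Write `Z_n`, `U_n` for the partial sums and `D_n = h_n Z_n - U_n`. Since
`h_{n+1} Z_{n+1} - U_{n+1} = h_{n+1} Z_n - U_n`, multiplying by `h_n` gives
`h_n D_{n+1} = h_{n+1} D_n + (h_n - h_{n+1}) (-U_n)`, a convex combination up to the factor `h_n`
because `0 ≤ h_{n+1} ≤ h_n`. Induction therefore gives `|D_n| ≤ max_{m ≤ n} |U_m|`, and
`h_j |Z_j| ≤ |D_j| + |U_j|` yields the factor `2`. -/

lemma abs_mul_sub_le_of_le_s16 {a b x u S : ℝ} (hb : 0 ≤ b) (hba : b ≤ a)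
    (hx : |a * x - u| ≤ S) (hu : |u| ≤ S) : |b * x - u| ≤ S := by
  rcases (hb.trans hba).eq_or_lt with ha | ha
  · obtain rfl : b = 0 := le_antisymm (ha ▸ hba) hb
    simpa using hu
  have hcomb : a * (b * x - u) = b * (a * x - u) + (b - a) * u := by ring
  refine le_of_mul_le_mul_left ?_ ha
  calc a * |b * x - u| = |b * (a * x - u) + (b - a) * u| := by
        rw [← hcomb, abs_mul, abs_of_pos ha]
    _ ≤ b * |a * x - u| + (a - b) * |u| := by
        refine (abs_add_le _ _).trans_eq ?_
        rw [abs_mul, abs_mul, abs_of_nonneg hb, abs_of_nonpos (sub_nonpos.2 hba), neg_sub]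
    _ ≤ b * S + (a - b) * S := by gcongr
    _ = a * S := by ring

lemma abs_mul_sum_Iic_sub_sum_Iic_mul_le {ι : Type*} [LinearOrder ι] [LocallyFiniteOrderBot ι]
    [OrderBot ι] [SuccOrder ι] [IsSuccArchimedean ι] {h : ι → ℝ} (hanti : Antitone h)
    (hnonneg : ∀ i, 0 ≤ h i) (z : ι → ℝ) (n : ι) :
    |h n * ∑ i ∈ Iic n, z i - ∑ i ∈ Iic n, h i * z i|
      ≤ partialSups (fun m => |∑ i ∈ Iic m, h i * z i|) n := by
  induction n using Succ.rec_bot with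
  | hbot =>
    have hIic : Iic (⊥ : ι) = {⊥} := by ext; simp
    rw [hIic, sum_singleton, sum_singleton, sub_self, abs_zero]
    exact (abs_nonneg _).trans <| le_partialSups (fun m => |∑ i ∈ Iic m, h i * z i|) ⊥
  | hsucc n ih =>
    by_cases hmax : IsMax n
    · rwa [hmax.succ_eq]
    have hsum (f : ι → ℝ) : ∑ i ∈ Iic (succ n), f i = f (succ n) + ∑ i ∈ Iic n, f i := by
      rw [← add_sum_Iio_eq_sum_Iic, Iio_succ_eq_Iic_of_not_isMax hmax]
    rw [hsum, hsum, mul_add, add_sub_add_left_eq_sub]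
    calc _ ≤ partialSups (fun m => |∑ i ∈ Iic m, h i * z i|) n :=
          abs_mul_sub_le_of_le_s16 (hnonneg _) (hanti (le_succ n)) ih
            (le_partialSups (fun m => |∑ i ∈ Iic m, h i * z i|) n)
      _ ≤ _ := (partialSups _).monotone (le_succ n)

theorem discrete_weighted_partial_sum_bound_general
    (k : ℕ) (h z : Fin k → ℝ)
    (hanti : Antitone h) (hnonneg : ∀ i, 0 ≤ h i)
    (j : Fin k) :
    h j * |∑ i ∈ Finset.Iic j, z i|
      ≤ 2 * (Finset.Iic j).sup' Finset.nonempty_Iic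
          (fun m => |∑ i ∈ Finset.Iic m, h i * z i|) := by
  obtain ⟨n, rfl⟩ : ∃ n, k = n + 1 := Nat.exists_eq_add_one.2 j.pos
  rw [← partialSups_apply]
  calc h j * |∑ i ∈ Iic j, z i| = |h j * ∑ i ∈ Iic j, z i| := by
        rw [abs_mul, abs_of_nonneg (hnonneg j)]
    _ ≤ _ := by
        linarith [abs_sub_abs_le_abs_sub (h j * ∑ i ∈ Iic j, z i) (∑ i ∈ Iic j, h i * z i),
          abs_mul_sum_Iic_sub_sum_Iic_mul_le hanti hnonneg z j,
          le_partialSups (fun m => |∑ i ∈ Iic m, h i * z i|) j]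

/-- discrete core of Gill's Lemma 2.9: for reals
`1 ≥ h 0 ≥ h 1 ≥ … ≥ h (k-1) ≥ 0` and `z i ∈ ℝ`, with partial sums `Z_j = Σ_{i≤j} z i` and
weighted partial sums `U_j = Σ_{i≤j} h i * z i`, one has
`h j * |Z_j| ≤ 2 * max_{m ≤ j} |U_m|` for every `j`. -/
theorem discrete_weighted_partial_sum_bound
    (k : ℕ) (h z : Fin k → ℝ)
    (hanti : Antitone h) (hle : ∀ i, h i ≤ 1) (hnonneg : ∀ i, 0 ≤ h i)
    (j : Fin k) :
    h j * |∑ i ∈ Finset.Iic j, z i|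
      ≤ 2 * (Finset.Iic j).sup' Finset.nonempty_Iic
          (fun m => |∑ i ∈ Finset.Iic m, h i * z i|) :=
  discrete_weighted_partial_sum_bound_general k h z hanti hnonneg j
end
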